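/- arXiv:1108.2812 — 7 statements merged into one kernel-verified Lean document; each statement's English description precedes it below -/
import Mathlib

section
/- Let ν be a symmetric Borel measure on ℝ with ∫_ℝ 1/(1+τ²) ν(dτ) < ∞ and such that ν(I) > 0 for every nonempty open interval I ⊆ (0,∞). Let μ be a Borel measure on ℝ^d, let c > 0, β > 0 and set Ψ(ξ) = c|ξ|^β. For t > 0 and a ≥ 0 set N_t(a) := ∫_ℝ |∫_0^t e^{−iτs} e^{−sa} ds|² ν(dτ). Then ∫_{ℝ^d} N_t(Ψ(ξ)) μ(dξ) < ∞ for every t > 0 if and only if ∫_{ℝ^d} ∫_ℝ 1/(τ² + (1+Ψ(ξ))²) ν(dτ) μ(dξ) < ∞. -/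
/-!
With `z = a + iτ` the inner integral is `∫_0^t e^{-zs} ds = (1 - e^{-zt}) / z`, so for `a ≥ 0`
its modulus is at most `min (t, 2/|z|)`, and for `a ≥ 1` at least `(1 - e^{-1}) / |z|` when
`t = 1`. Since `|z|² = a² + τ²` is comparable with `τ² + (1 + a)²` once `a ≥ 1`, this gives
`N_t(a) ≲ ∫ ν(dτ) / (τ² + (1 + a)²)` for all `a ≥ 0`, and the reverse bound against `N_1(a)`
for `a ≥ 1`. On the remaining set `{Ψ < 1}` the integrand `N_1(Ψ)` is bounded below, because
`Re ∫_0^1 e^{-zs} ds ≥ e^{-1} cos 1` for `|τ| ≤ 1`; so `∫ N_1(Ψ) dμ < ∞` forces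
`μ {Ψ < 1} < ∞`, and there `∫ ν(dτ) / (τ² + (1 + Ψ)²) ≤ ∫ ν(dτ) / (1 + τ²) < ∞`.
-/

open MeasureTheory Set intervalIntegral
open scoped ENNReal Complex Real

section SegmentIntegral

variable {z : ℂ} {t : ℝ}

lemma integral_cexp_neg_mul (hz : z ≠ 0) :
    ∫ s in (0:ℝ)..t, cexp (-(z * s)) = (1 - cexp (-(z * t))) / z := by
  simp_rw [← neg_mul]
  rw [integral_exp_mul_complex (neg_ne_zero.2 hz)]
  simp only [Complex.ofReal_zero, mul_zero, Complex.exp_zero, div_neg, ← neg_div, neg_sub]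

lemma norm_cexp_neg_mul_ofReal (z : ℂ) (s : ℝ) : ‖cexp (-(z * s))‖ = rexp (-(z.re * s)) := by
  simp [Complex.norm_exp]

lemma norm_integral_cexp_neg_mul_le (hz : 0 ≤ z.re) (ht : 0 ≤ t) :
    ‖∫ s in (0:ℝ)..t, cexp (-(z * s))‖ ≤ t := by
  have h := norm_integral_le_of_norm_le_const (a := 0) (b := t) (C := 1)
    (f := fun s : ℝ => cexp (-(z * s))) fun s hs => by
      rw [uIoc_of_le ht] at hs
      rw [norm_cexp_neg_mul_ofReal, Real.exp_le_one_iff, neg_nonpos]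
      exact mul_nonneg hz hs.1.le
  simpa [abs_of_nonneg ht] using h

lemma norm_integral_cexp_neg_mul_mul_norm_le (hz : 0 ≤ z.re) (ht : 0 ≤ t) :
    ‖∫ s in (0:ℝ)..t, cexp (-(z * s))‖ * ‖z‖ ≤ 2 := by
  rcases eq_or_ne z 0 with rfl | hz0
  · simp
  rw [integral_cexp_neg_mul hz0, norm_div, div_mul_cancel₀ _ (norm_ne_zero_iff.2 hz0)]
  have hexp : ‖cexp (-(z * t))‖ ≤ 1 := by
    rw [norm_cexp_neg_mul_ofReal, Real.exp_le_one_iff, neg_nonpos]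
    exact mul_nonneg hz ht
  calc ‖1 - cexp (-(z * t))‖ ≤ ‖(1 : ℂ)‖ + ‖cexp (-(z * t))‖ := norm_sub_le _ _
    _ ≤ 2 := by rw [norm_one]; linarith

lemma one_sub_exp_le_norm_integral_cexp_neg_mul_mul_norm (z : ℂ) (t : ℝ) :
    1 - rexp (-(z.re * t)) ≤ ‖∫ s in (0:ℝ)..t, cexp (-(z * s))‖ * ‖z‖ := by
  rcases eq_or_ne z 0 with rfl | hz0
  · simp
  rw [integral_cexp_neg_mul hz0, norm_div, div_mul_cancel₀ _ (norm_ne_zero_iff.2 hz0),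
    ← norm_cexp_neg_mul_ofReal, ← norm_one (α := ℂ)]
  exact norm_sub_norm_le _ _

lemma exp_neg_one_mul_cos_one_le_norm_integral_cexp_neg_mul (hre : z.re ≤ 1)
    (him : |z.im| ≤ 1) :
    rexp (-1) * Real.cos 1 ≤ ‖∫ s in (0:ℝ)..1, cexp (-(z * s))‖ := by
  have hint : IntervalIntegrable (fun s : ℝ => cexp (-(z * s))) volume 0 1 :=
    (by fun_prop : Continuous fun s : ℝ => cexp (-(z * s))).intervalIntegrable 0 1
  refine le_trans ?_ (Complex.re_le_norm _)
  have hre_int := intervalIntegral_re hint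
  simp only [RCLike.re_to_complex] at hre_int
  rw [← hre_int]
  calc rexp (-1) * Real.cos 1 = ∫ _ in (0:ℝ)..1, rexp (-1) * Real.cos 1 := by simp
    _ ≤ _ := by
      refine integral_mono_on zero_le_one intervalIntegrable_const
        ((by fun_prop : Continuous fun s : ℝ => (cexp (-(z * s))).re).intervalIntegrable 0 1)
        fun s ⟨hs0, hs1⟩ => ?_
      have him_s : |z.im * s| ≤ 1 := by
        rw [abs_mul, abs_of_nonneg hs0]; nlinarith [abs_nonneg z.im]
      simp only [Complex.exp_re, Complex.neg_re, Complex.neg_im, Complex.mul_re, Complex.mul_im,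
        Complex.ofReal_re, Complex.ofReal_im, mul_zero, sub_zero, zero_add, Real.cos_neg]
      rw [← Real.cos_abs (z.im * s)]
      refine mul_le_mul (Real.exp_le_exp.2 (by nlinarith))
        (Real.cos_le_cos_of_nonneg_of_le_pi (abs_nonneg _) (by linarith [Real.pi_gt_three]) him_s)
        Real.cos_one_pos.le (Real.exp_nonneg _)

end SegmentIntegral

lemma integral_cexp_mul_exp_eq (a τ t : ℝ) :
    ∫ s in (0:ℝ)..t, cexp (-(τ * Complex.I * s)) * (rexp (-(s * a)) : ℂ)
      = ∫ s in (0:ℝ)..t, cexp (-((a + τ * Complex.I) * s)) := by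
  refine integral_congr fun s _ => ?_
  rw [Complex.ofReal_exp, ← Complex.exp_add]
  push_cast
  ring_nf

section PointwiseBounds

variable {a τ t : ℝ}

lemma sq_norm_integral_cexp_le (ha : 0 ≤ a) (ht : 0 ≤ t) :
    ‖∫ s in (0:ℝ)..t, cexp (-((a + τ * Complex.I) * s))‖ ^ 2
      ≤ (2 * t ^ 2 + 8) * (1 / (τ ^ 2 + (1 + a) ^ 2)) := by
  set z : ℂ := a + τ * Complex.I
  set F := ‖∫ s in (0:ℝ)..t, cexp (-(z * s))‖
  have hzre : z.re = a := by simp [z]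
  have hz : ‖z‖ ^ 2 = a ^ 2 + τ ^ 2 := by rw [Complex.sq_norm, Complex.normSq_add_mul_I]
  have hF : F ^ 2 ≤ t ^ 2 :=
    pow_le_pow_left₀ (norm_nonneg _) (norm_integral_cexp_neg_mul_le (hzre ▸ ha) ht) 2
  have hFz : (F * ‖z‖) ^ 2 ≤ 2 ^ 2 := pow_le_pow_left₀ (by positivity)
    (norm_integral_cexp_neg_mul_mul_norm_le (hzre ▸ ha) ht) 2
  have hD : 0 < τ ^ 2 + (1 + a) ^ 2 := by positivity
  rw [mul_one_div, le_div_iff₀ hD]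
  -- `(1 + a)² ≤ 2 + 2a²`, then `|F| ≤ t` and `|F| |z| ≤ 2`.
  calc F ^ 2 * (τ ^ 2 + (1 + a) ^ 2) ≤ 2 * F ^ 2 + 2 * (F * ‖z‖) ^ 2 := by
        rw [mul_pow, hz]; nlinarith [sq_nonneg (a - 1), sq_nonneg F]
    _ ≤ 2 * t ^ 2 + 8 := by linarith

lemma one_div_le_sq_norm_integral_cexp (ha : 1 ≤ a) :
    1 / (τ ^ 2 + (1 + a) ^ 2)
      ≤ ((1 - rexp (-1)) ^ 2)⁻¹ * ‖∫ s in (0:ℝ)..1, cexp (-((a + τ * Complex.I) * s))‖ ^ 2 := by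
  set z : ℂ := a + τ * Complex.I
  set F := ‖∫ s in (0:ℝ)..1, cexp (-(z * s))‖
  have hz : ‖z‖ ^ 2 = a ^ 2 + τ ^ 2 := by rw [Complex.sq_norm, Complex.normSq_add_mul_I]
  have hc : 0 < 1 - rexp (-1) := by
    linarith [Real.exp_lt_one_iff.2 (neg_one_lt_zero : (-1 : ℝ) < 0)]
  have hlow : 1 - rexp (-1) ≤ F * ‖z‖ := by
    refine le_trans ?_ (one_sub_exp_le_norm_integral_cexp_neg_mul_mul_norm z 1)
    have hzre : z.re = a := by simp [z]
    rw [hzre, mul_one]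
    gcongr
  have hD : 0 < τ ^ 2 + (1 + a) ^ 2 := by positivity
  rw [inv_mul_eq_div, div_le_div_iff₀ hD (by positivity), one_mul]
  calc (1 - rexp (-1)) ^ 2 ≤ (F * ‖z‖) ^ 2 := pow_le_pow_left₀ hc.le hlow 2
    _ ≤ F ^ 2 * (τ ^ 2 + (1 + a) ^ 2) := by
        rw [mul_pow, hz]; nlinarith [sq_nonneg F]

end PointwiseBounds

lemma lintegral_ofReal_le_ofReal_mul_lintegral_ofReal {α : Type*} [MeasurableSpace α]
    {ν : Measure α} {f g : α → ℝ} {C : ℝ} (hC : 0 ≤ C) (hfg : ∀ x, f x ≤ C * g x) :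
    ∫⁻ x, ENNReal.ofReal (f x) ∂ν ≤ ENNReal.ofReal C * ∫⁻ x, ENNReal.ofReal (g x) ∂ν := by
  rw [← lintegral_const_mul' _ _ ENNReal.ofReal_ne_top]
  exact lintegral_mono fun x => (ENNReal.ofReal_le_ofReal (hfg x)).trans_eq (ENNReal.ofReal_mul hC)

-- `N_t(a)` of the paper.
noncomputable def parabolicIntegral (ν : Measure ℝ) (t a : ℝ) : ℝ≥0∞ :=
  ∫⁻ τ, ENNReal.ofReal
    (‖∫ s in (0:ℝ)..t, cexp (-(τ * Complex.I * s)) * (rexp (-(s * a)) : ℂ)‖ ^ 2) ∂ν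

noncomputable def resolventIntegral (ν : Measure ℝ) (a : ℝ) : ℝ≥0∞ :=
  ∫⁻ τ, ENNReal.ofReal (1 / (τ ^ 2 + (1 + a) ^ 2)) ∂ν

section Comparison

variable (ν : Measure ℝ) {a t : ℝ}

lemma parabolicIntegral_le (ha : 0 ≤ a) (ht : 0 ≤ t) :
    parabolicIntegral ν t a ≤ ENNReal.ofReal (2 * t ^ 2 + 8) * resolventIntegral ν a := by
  refine lintegral_ofReal_le_ofReal_mul_lintegral_ofReal (by positivity) fun τ => ?_
  rw [integral_cexp_mul_exp_eq]
  exact sq_norm_integral_cexp_le ha ht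

lemma resolventIntegral_le (ha : 1 ≤ a) :
    resolventIntegral ν a
      ≤ ENNReal.ofReal ((1 - rexp (-1)) ^ 2)⁻¹ * parabolicIntegral ν 1 a := by
  refine lintegral_ofReal_le_ofReal_mul_lintegral_ofReal (by positivity) fun τ => ?_
  rw [integral_cexp_mul_exp_eq]
  exact one_div_le_sq_norm_integral_cexp ha

lemma resolventIntegral_le_lintegral (ha : 0 ≤ a) :
    resolventIntegral ν a ≤ ∫⁻ τ, ENNReal.ofReal (1 / (1 + τ ^ 2)) ∂ν :=
  lintegral_mono fun τ => ENNReal.ofReal_le_ofReal <|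
    one_div_le_one_div_of_le (by positivity) (by nlinarith)

lemma ofReal_mul_measure_Icc_le_parabolicIntegral (ha : a ≤ 1) :
    ENNReal.ofReal ((rexp (-1) * Real.cos 1) ^ 2) * ν (Icc (-1) 1) ≤ parabolicIntegral ν 1 a := by
  rw [← setLIntegral_const]
  refine (setLIntegral_mono' measurableSet_Icc fun τ hτ => ?_).trans
    (setLIntegral_le_lintegral _ _)
  rw [integral_cexp_mul_exp_eq]
  refine ENNReal.ofReal_le_ofReal
    (pow_le_pow_left₀ (mul_pos (Real.exp_pos _) Real.cos_one_pos).le ?_ 2)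
  exact exp_neg_one_mul_cos_one_le_norm_integral_cexp_neg_mul (by simpa using ha)
    (by simpa [abs_le] using hτ)

end Comparison

lemma measure_setOf_lt_one_lt_top {X : Type*} [MeasurableSpace X] (ν : Measure ℝ)
    (μ : Measure X) {Ψ : X → ℝ} (hΨ : Measurable Ψ) (hν : ν (Icc (-1) 1) ≠ 0)
    (hN : ∫⁻ ξ, parabolicIntegral ν 1 (Ψ ξ) ∂μ < ⊤) :
    μ {ξ | Ψ ξ < 1} < ⊤ := by
  set ε := ENNReal.ofReal ((rexp (-1) * Real.cos 1) ^ 2) * ν (Icc (-1) 1)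
  have hε : ε ≠ 0 := mul_ne_zero
    (ENNReal.ofReal_pos.2 (pow_pos (mul_pos (Real.exp_pos _) Real.cos_one_pos) 2)).ne' hν
  refine ENNReal.lt_top_of_mul_ne_top_right (a := ε) (ne_top_of_le_ne_top hN.ne ?_) hε
  calc ε * μ {ξ | Ψ ξ < 1} = ∫⁻ _ in {ξ | Ψ ξ < 1}, ε ∂μ := (setLIntegral_const _ _).symm
    _ ≤ ∫⁻ ξ in {ξ | Ψ ξ < 1}, parabolicIntegral ν 1 (Ψ ξ) ∂μ :=
        setLIntegral_mono' (measurableSet_lt hΨ measurable_const) fun _ hξ =>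
          ofReal_mul_measure_Icc_le_parabolicIntegral ν (le_of_lt hξ)
    _ ≤ _ := setLIntegral_le_lintegral _ _

theorem lintegral_parabolicIntegral_lt_top_iff {X : Type*} [MeasurableSpace X]
    (ν : Measure ℝ) (μ : Measure X) {Ψ : X → ℝ} (hΨ : Measurable Ψ) (hΨ0 : ∀ ξ, 0 ≤ Ψ ξ)
    (hK : Integrable (fun τ => 1 / (1 + τ ^ 2)) ν) (hν : ν (Icc (-1) 1) ≠ 0) :
    (∀ t, 0 < t → ∫⁻ ξ, parabolicIntegral ν t (Ψ ξ) ∂μ < ⊤)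
      ↔ ∫⁻ ξ, resolventIntegral ν (Ψ ξ) ∂μ < ⊤ := by
  refine ⟨fun hN => ?_, fun hR t ht => ?_⟩
  · have hN1 := hN 1 one_pos
    set S := {ξ | Ψ ξ < 1}
    have hS : MeasurableSet S := measurableSet_lt hΨ measurable_const
    rw [← lintegral_add_compl _ hS]
    refine ENNReal.add_lt_top.2 ⟨?_, ?_⟩
    · calc ∫⁻ ξ in S, resolventIntegral ν (Ψ ξ) ∂μ
          ≤ ∫⁻ _ in S, ∫⁻ τ, ENNReal.ofReal (1 / (1 + τ ^ 2)) ∂ν ∂μ :=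
            lintegral_mono fun ξ => resolventIntegral_le_lintegral ν (hΨ0 ξ)
        _ = (∫⁻ τ, ENNReal.ofReal (1 / (1 + τ ^ 2)) ∂ν) * μ S := setLIntegral_const _ _
        _ < ⊤ := ENNReal.mul_lt_top hK.lintegral_lt_top
            (measure_setOf_lt_one_lt_top ν μ hΨ hν hN1)
    · calc ∫⁻ ξ in Sᶜ, resolventIntegral ν (Ψ ξ) ∂μ
          ≤ ∫⁻ ξ in Sᶜ, ENNReal.ofReal ((1 - rexp (-1)) ^ 2)⁻¹ * parabolicIntegral ν 1 (Ψ ξ) ∂μ :=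
            setLIntegral_mono' hS.compl fun ξ hξ => resolventIntegral_le ν (not_lt.1 hξ)
        _ ≤ ENNReal.ofReal ((1 - rexp (-1)) ^ 2)⁻¹ * ∫⁻ ξ, parabolicIntegral ν 1 (Ψ ξ) ∂μ := by
            rw [lintegral_const_mul' _ _ ENNReal.ofReal_ne_top]
            exact mul_le_mul_right (setLIntegral_le_lintegral _ _) _
        _ < ⊤ := ENNReal.mul_lt_top ENNReal.ofReal_lt_top hN1
  · calc ∫⁻ ξ, parabolicIntegral ν t (Ψ ξ) ∂μ
        ≤ ∫⁻ ξ, ENNReal.ofReal (2 * t ^ 2 + 8) * resolventIntegral ν (Ψ ξ) ∂μ :=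
          lintegral_mono fun ξ => parabolicIntegral_le ν (hΨ0 ξ) ht.le
      _ = ENNReal.ofReal (2 * t ^ 2 + 8) * ∫⁻ ξ, resolventIntegral ν (Ψ ξ) ∂μ :=
          lintegral_const_mul' _ _ ENNReal.ofReal_ne_top
      _ < ⊤ := ENNReal.mul_lt_top ENNReal.ofReal_lt_top hR

theorem stmt_3_general (d : ℕ) (ν : Measure ℝ)
    (hK : Integrable (fun τ => 1 / (1 + τ ^ 2)) ν)
    (hν : ∀ a b : ℝ, 0 ≤ a → a < b → 0 < ν (Set.Ioo a b))
    (μ : Measure (EuclideanSpace ℝ (Fin d)))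
    (c β : ℝ) (hc : 0 < c) :
    (∀ t : ℝ, 0 < t →
      (∫⁻ ξ, (∫⁻ τ, ENNReal.ofReal
        (‖∫ s in (0:ℝ)..t, Complex.exp (-(τ * Complex.I * s))
            * (Real.exp (-(s * (c * ‖ξ‖ ^ β))) : ℂ)‖ ^ 2) ∂ν) ∂μ) < ⊤)
    ↔ (∫⁻ ξ, (∫⁻ τ, ENNReal.ofReal
          (1 / (τ ^ 2 + (1 + c * ‖ξ‖ ^ β) ^ 2)) ∂ν) ∂μ) < ⊤ := by
  have hν' : ν (Icc (-1) 1) ≠ 0 :=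
    ((hν 0 1 le_rfl one_pos).trans_le (measure_mono (Ioo_subset_Icc_self.trans
      (Icc_subset_Icc (by norm_num) le_rfl)))).ne'
  exact lintegral_parabolicIntegral_lt_top_iff ν μ (by fun_prop) (fun ξ => by positivity) hK hν'

/-- Existence of a random field solution for the fractional heat equation:
`∫ N_t(Ψ(ξ)) μ(dξ) < ∞` for all `t > 0` iff `∫∫ 1/(τ²+(1+Ψ(ξ))²) ν(dτ) μ(dξ) < ∞`. -/
theorem stmt_3 (d : ℕ) (ν : Measure ℝ)
    (hsymm : ν.map (fun τ => -τ) = ν)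
    (hK : Integrable (fun τ => 1 / (1 + τ ^ 2)) ν)
    (hν : ∀ a b : ℝ, 0 ≤ a → a < b → 0 < ν (Set.Ioo a b))
    (μ : Measure (EuclideanSpace ℝ (Fin d)))
    (c β : ℝ) (hc : 0 < c) (hβ : 0 < β) :
    (∀ t : ℝ, 0 < t →
      (∫⁻ ξ, (∫⁻ τ, ENNReal.ofReal
        (‖∫ s in (0:ℝ)..t, Complex.exp (-(τ * Complex.I * s))
            * (Real.exp (-(s * (c * ‖ξ‖ ^ β))) : ℂ)‖ ^ 2) ∂ν) ∂μ) < ⊤)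
    ↔ (∫⁻ ξ, (∫⁻ τ, ENNReal.ofReal
          (1 / (τ ^ 2 + (1 + c * ‖ξ‖ ^ β) ^ 2)) ∂ν) ∂μ) < ⊤ :=
  stmt_3_general d ν hK hν μ c β hc
end

section
/- Let η : (0,∞) → (0,∞) be a measurable function satisfying condition (C) and which is either non-increasing on (0,∞) or non-decreasing on (0,∞). For t > 0 and a > 0 set N_t(a) := ∫_ℝ |∫_0^t e^{−iτs} (sin(sa)/a) ds|² η(|τ|) dτ. Then there exists a constant C > 0 (depending only on η) such that for every t > 0 and every a > 0: N_t(a) ≤ C t (1/a) ∫_ℝ η(|τ|)/(|τ| + a)² dτ. -/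
/-!
Let `F(τ)` be the inner integral. Writing `sin` through exponentials gives
`‖F(τ)‖ ≤ (2/a) (1/(|τ - a| + 2/t) + 1/(|τ + a| + 2/t))`, and integrating by parts gives
`‖F(τ)‖ ≤ 2t/|τ|`. Away from the resonant strips `|τ| ≈ a`, and everywhere when `ta ≤ 2`, these
yield `‖F(τ)‖² ≲ (t/a) / (|τ| + a)²`, which integrates against `η(|τ|)` directly. On the strips,
monotonicity and condition (C) give `η(|τ|) ≲ η(a)`, the Lorentzians `1/(|τ ∓ a| + 2/t)²` have
integral `≲ t`, and monotonicity once more bounds `η(a)/a` by `∫ η(|τ|)/(|τ| + a)² dτ`, through an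
interval of length `≳ a` near `a` on which `η ≥ η(a)`.
-/

open MeasureTheory Set
open scoped Real

noncomputable def truncSinFourier (t a τ : ℝ) : ℂ :=
  ∫ s in (0:ℝ)..t, Complex.exp (-(τ * Complex.I * s)) * ((Real.sin (s * a) / a : ℝ) : ℂ)

theorem norm_intervalIntegral_exp_mul_I_le {t : ℝ} (ht : 0 < t) (b : ℝ) :
    ‖∫ s in (0:ℝ)..t, Complex.exp (b * s * Complex.I)‖ ≤ 4 / (|b| + 2 / t) := by
  set J := ∫ s in (0:ℝ)..t, Complex.exp (b * s * Complex.I)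
  have hJt : ‖J‖ ≤ t := by
    simpa [abs_of_pos ht] using intervalIntegral.norm_integral_le_of_norm_le_const
      (a := 0) (b := t) (C := 1) fun s _ => by
        exact_mod_cast (Complex.norm_exp_ofReal_mul_I (b * s)).le
  have hJb : ‖J‖ * |b| ≤ 2 := by
    rcases eq_or_ne b 0 with rfl | hb
    · simp
    have hc : (b : ℂ) * Complex.I ≠ 0 := by simp [hb]
    have hJ : J = (Complex.exp (b * t * Complex.I) - 1) / (b * Complex.I) := by
      simp only [J, mul_right_comm (b : ℂ) _ Complex.I]
      rw [integral_exp_mul_complex hc]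
      simp
    rw [hJ, norm_div, norm_mul, Complex.norm_I, Complex.norm_real, mul_one, Real.norm_eq_abs,
      div_mul_cancel₀ _ (abs_ne_zero.mpr hb)]
    calc ‖Complex.exp (b * t * Complex.I) - 1‖ ≤ ‖Complex.exp (b * t * Complex.I)‖ + ‖(1 : ℂ)‖ :=
          norm_sub_le _ _
      _ = 2 := by norm_num [← Complex.ofReal_mul, Complex.norm_exp_ofReal_mul_I]
  have hJ2 : ‖J‖ * (2 / t) ≤ 2 := by rw [mul_div_assoc', div_le_iff₀ ht]; linarith
  rw [le_div_iff₀ (by positivity), mul_add]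
  linarith

theorem truncSinFourier_eq {a : ℝ} (ha : 0 < a) (t τ : ℝ) :
    truncSinFourier t a τ = Complex.I / (2 * a) *
      ((∫ s in (0:ℝ)..t, Complex.exp (↑(-(τ + a)) * s * Complex.I))
        - ∫ s in (0:ℝ)..t, Complex.exp (↑(a - τ) * s * Complex.I)) := by
  have ha' : (a : ℂ) ≠ 0 := by exact_mod_cast ha.ne'
  have hpt : ∀ s : ℝ, Complex.exp (-(τ * Complex.I * s)) * ((Real.sin (s * a) / a : ℝ) : ℂ)
      = Complex.I / (2 * a) * (Complex.exp (↑(-(τ + a)) * s * Complex.I)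
          - Complex.exp (↑(a - τ) * s * Complex.I)) := by
    intro s
    rw [Complex.ofReal_div, Complex.ofReal_sin, Complex.sin,
      show (↑(-(τ + a)) * s * Complex.I : ℂ) = -(τ * Complex.I * s) + -(↑(s * a) * Complex.I) by
        push_cast; ring,
      show (↑(a - τ) * s * Complex.I : ℂ) = -(τ * Complex.I * s) + ↑(s * a) * Complex.I by
        push_cast; ring,
      Complex.exp_add, Complex.exp_add]
    field_simp
  simp only [truncSinFourier, hpt]
  rw [intervalIntegral.integral_const_mul, intervalIntegral.integral_sub] <;>
    exact (by fun_prop : Continuous _).intervalIntegrable _ _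

theorem norm_truncSinFourier_le {t a : ℝ} (ht : 0 < t) (ha : 0 < a) (τ : ℝ) :
    ‖truncSinFourier t a τ‖ ≤ 2 / a * (1 / (|τ - a| + 2 / t) + 1 / (|τ + a| + 2 / t)) := by
  rw [truncSinFourier_eq ha, norm_mul, norm_div, Complex.norm_I, Complex.norm_mul,
    Complex.norm_ofNat, Complex.norm_real, Real.norm_eq_abs, abs_of_pos ha]
  have hsub := (norm_sub_le _ _).trans
    (add_le_add (norm_intervalIntegral_exp_mul_I_le ht (-(τ + a)))
      (norm_intervalIntegral_exp_mul_I_le ht (a - τ)))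
  rw [abs_neg, abs_sub_comm] at hsub
  calc 1 / (2 * a) * ‖_‖ ≤ 1 / (2 * a) * (4 / (|τ + a| + 2 / t) + 4 / (|τ - a| + 2 / t)) := by
        gcongr
    _ = _ := by field_simp; ring

theorem norm_intervalIntegral_exp_mul_le_of_hasDerivAt {g g' : ℝ → ℂ} {t τ M L : ℝ}
    (ht : 0 ≤ t) (hτ : τ ≠ 0) (hg : ∀ x ∈ uIcc 0 t, HasDerivAt g (g' x) x)
    (hg' : IntervalIntegrable g' volume 0 t) (hg0 : g 0 = 0) (hgt : ‖g t‖ ≤ M)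
    (hg'L : ∀ x, ‖g' x‖ ≤ L) :
    ‖∫ s in (0:ℝ)..t, Complex.exp (-(τ * Complex.I * s)) * g s‖ ≤ (M + L * t) / |τ| := by
  set c : ℂ := -(τ * Complex.I)
  have hc : c ≠ 0 := by simp [c, hτ]
  have hcτ : ‖c‖ = |τ| := by simp [c]
  have hexp : ∀ s : ℝ, ‖Complex.exp (c * s)‖ = 1 := fun s => by
    simpa [c, mul_right_comm] using Complex.norm_exp_ofReal_mul_I (-(τ * s))
  have hv : ∀ x ∈ uIcc 0 t, HasDerivAt (fun s : ℝ => Complex.exp (c * s) / c)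
      (Complex.exp (c * x)) x := fun x _ => by
    simpa [mul_div_cancel_right₀ _ hc] using
      ((((hasDerivAt_id (x : ℂ)).const_mul c).cexp).div_const c).comp_ofReal
  have hibp := intervalIntegral.integral_mul_deriv_eq_deriv_mul hg hv hg'
    ((by fun_prop : Continuous fun s : ℝ => Complex.exp (c * s)).intervalIntegrable 0 t)
  have hbody : ‖∫ s in (0:ℝ)..t, g' s * (Complex.exp (c * s) / c)‖ ≤ L / |τ| * t := by
    simpa [abs_of_nonneg ht] using intervalIntegral.norm_integral_le_of_norm_le_const
      (a := 0) (b := t) fun s _ => by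
        rw [norm_mul, norm_div, hexp, hcτ, ← mul_div_assoc, mul_one]
        gcongr
        exact hg'L s
  have hbdry : ‖g t * (Complex.exp (c * t) / c)‖ ≤ M / |τ| := by
    rw [norm_mul, norm_div, hexp, hcτ, ← mul_div_assoc, mul_one]
    gcongr
  simp only [show ∀ s : ℝ, Complex.exp (-(τ * Complex.I * s)) * g s = g s * Complex.exp (c * s)
    from fun s => by simp only [c, neg_mul, mul_comm (g s)], hibp, hg0, zero_mul, sub_zero]
  calc _ ≤ M / |τ| + L / |τ| * t := (norm_sub_le _ _).trans (add_le_add hbdry hbody)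
    _ = (M + L * t) / |τ| := by ring

theorem norm_truncSinFourier_le_div_abs {t a : ℝ} (ht : 0 < t) (ha : 0 < a) {τ : ℝ} (hτ : τ ≠ 0) :
    ‖truncSinFourier t a τ‖ ≤ 2 * t / |τ| := by
  have hsin : ∀ x, HasDerivAt (fun s : ℝ => ((Real.sin (s * a) / a : ℝ) : ℂ))
      ((Real.cos (x * a) : ℝ) : ℂ) x := fun x => by
    simpa [mul_div_assoc, div_self ha.ne'] using
      ((((hasDerivAt_mul_const a).sin).div_const a).ofReal_comp : HasDerivAt _ _ x)
  have hsin_le : ‖((Real.sin (t * a) / a : ℝ) : ℂ)‖ ≤ t := by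
    rw [Complex.norm_real, Real.norm_eq_abs, abs_div, abs_of_pos ha, div_le_iff₀ ha]
    exact (Real.abs_sin_le_abs).trans (abs_of_pos (by positivity)).le
  have := norm_intervalIntegral_exp_mul_le_of_hasDerivAt ht.le hτ (fun x _ => hsin x)
    ((by fun_prop : Continuous fun s : ℝ => ((Real.cos (s * a) : ℝ) : ℂ)).intervalIntegrable 0 t)
    (by simp) hsin_le (L := 1) fun x => by
      rw [Complex.norm_real, Real.norm_eq_abs]; exact Real.abs_cos_le_one _
  rwa [one_mul, ← two_mul] at this

theorem norm_truncSinFourier_le_of_abs_abs_sub {t a : ℝ} (ht : 0 < t) (ha : 0 < a) (τ : ℝ) :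
    ‖truncSinFourier t a τ‖ ≤ 4 / (a * (|(|τ| - a)| + 2 / t)) := by
  have hd : 0 < |(|τ| - a)| + 2 / t := by positivity
  have h₁ : 1 / (|τ - a| + 2 / t) ≤ 1 / (|(|τ| - a)| + 2 / t) := by
    have := abs_abs_sub_abs_le_abs_sub τ a
    rw [abs_of_pos ha] at this
    exact one_div_le_one_div_of_le hd (by linarith)
  have h₂ : 1 / (|τ + a| + 2 / t) ≤ 1 / (|(|τ| - a)| + 2 / t) := by
    have := abs_abs_sub_abs_le_abs_sub τ (-a)
    rw [abs_neg, abs_of_pos ha, sub_neg_eq_add] at this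
    exact one_div_le_one_div_of_le hd (by linarith)
  calc _ ≤ 2 / a * (1 / (|τ - a| + 2 / t) + 1 / (|τ + a| + 2 / t)) :=
        norm_truncSinFourier_le ht ha τ
    _ ≤ 2 / a * (1 / (|(|τ| - a)| + 2 / t) + 1 / (|(|τ| - a)| + 2 / t)) := by gcongr
    _ = _ := by field_simp; ring

theorem norm_truncSinFourier_sq_le {t a : ℝ} (ht : 0 < t) (ha : 0 < a) (τ : ℝ) :
    ‖truncSinFourier t a τ‖ ^ 2
      ≤ 8 / a ^ 2 * (1 / (|τ - a| + 2 / t) ^ 2 + 1 / (|τ + a| + 2 / t) ^ 2) := by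
  set u := 1 / (|τ - a| + 2 / t)
  set v := 1 / (|τ + a| + 2 / t)
  calc _ ≤ (2 / a * (u + v)) ^ 2 := by
        gcongr
        exact norm_truncSinFourier_le ht ha τ
    _ ≤ 8 / a ^ 2 * (u ^ 2 + v ^ 2) := by
        rw [mul_pow, div_pow, show (8 : ℝ) = 2 ^ 2 * 2 by norm_num, mul_div_right_comm, mul_assoc]
        gcongr
        nlinarith [sq_nonneg (u - v)]
    _ = _ := by simp only [u, v, div_pow, one_pow]

theorem norm_truncSinFourier_sq_le_of_far {t a : ℝ} (ht : 0 < t) (ha : 0 < a) {τ : ℝ}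
    (hfar : t * a ≤ 2 ∨ a / 2 ≤ |(|τ| - a)|) :
    ‖truncSinFourier t a τ‖ ^ 2 ≤ 200 * (t / a) / (|τ| + a) ^ 2 := by
  rw [le_div_iff₀ (by positivity), ← mul_pow]
  rcases le_or_gt (t * a) 2 with hta | hta
  · have hF : ‖truncSinFourier t a τ‖ * (|τ| + a) ≤ 4 * t := by
      rcases le_or_gt |τ| a with hτa | hτa
      · have hF := norm_truncSinFourier_le_of_abs_abs_sub ht ha τ
        have h2ta : 4 / (a * (|(|τ| - a)| + 2 / t)) ≤ 2 * t / a := by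
          calc _ ≤ 4 / (a * (2 / t)) := by gcongr; linarith [abs_nonneg (|τ| - a)]
            _ = 2 * t / a := by field_simp; ring
        calc _ ≤ 2 * t / a * (a + a) := by gcongr; exact hF.trans h2ta
          _ = 4 * t := by field_simp; ring
      · have hτ : τ ≠ 0 := by rintro rfl; simp at hτa; linarith
        have hF := norm_truncSinFourier_le_div_abs ht ha hτ
        rw [le_div_iff₀ (by positivity)] at hF
        nlinarith [norm_nonneg (truncSinFourier t a τ)]
    calc _ ≤ (4 * t) ^ 2 := by gcongr
      _ ≤ 200 * (t / a) := by
        rw [mul_div_assoc', le_div_iff₀ ha]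
        nlinarith [mul_le_mul_of_nonneg_left hta ht.le]
  · have hd : a / 2 ≤ |(|τ| - a)| := hfar.resolve_left hta.not_ge
    have hF := norm_truncSinFourier_le_of_abs_abs_sub ht ha τ
    have hsum : |τ| + a ≤ 5 * |(|τ| - a)| := by
      rcases le_or_gt |τ| a with h | h
      · rw [abs_of_nonpos (sub_nonpos.2 h)] at hd ⊢; linarith
      · rw [abs_of_pos (sub_pos.2 h)] at hd ⊢; linarith
    have hdpos : 0 < |(|τ| - a)| := by linarith
    have hF' : ‖truncSinFourier t a τ‖ * (|τ| + a) ≤ 20 / a := by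
      calc _ ≤ 4 / (a * |(|τ| - a)|) * (5 * |(|τ| - a)|) := by
            gcongr
            exact hF.trans (by gcongr; linarith [div_pos two_pos ht])
        _ = 20 / a := by field_simp; ring
    calc _ ≤ (20 / a) ^ 2 := by gcongr
      _ ≤ 200 * (t / a) := by
        rw [div_pow, div_le_iff₀ (by positivity),
          show 200 * (t / a) * a ^ 2 = 200 * (t * a) by field_simp]
        nlinarith

theorem ofReal_norm_truncSinFourier_sq_mul_le {t a : ℝ} (ht : 0 < t) (ha : 0 < a) (τ : ℝ)
    {y M : ℝ} (hyM : a / 2 < |τ| → |τ| < 3 * a / 2 → y ≤ M) :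
    ENNReal.ofReal (‖truncSinFourier t a τ‖ ^ 2 * y)
      ≤ ENNReal.ofReal (8 * M / a ^ 2 * (1 / (|τ - a| + 2 / t) ^ 2 + 1 / (|τ + a| + 2 / t) ^ 2))
        + ENNReal.ofReal (200 * (t / a)) * ENNReal.ofReal (y / (|τ| + a) ^ 2) := by
  rcases le_or_gt y 0 with hy | hy
  · rw [ENNReal.ofReal_of_nonpos (mul_nonpos_of_nonneg_of_nonpos (sq_nonneg _) hy)]
    exact zero_le
  by_cases hstrip : 2 < t * a ∧ |(|τ| - a)| < a / 2
  · refine le_add_right (ENNReal.ofReal_le_ofReal ?_)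
    obtain ⟨h₁, h₂⟩ := abs_lt.1 hstrip.2
    calc _ ≤ 8 / a ^ 2 * (1 / (|τ - a| + 2 / t) ^ 2 + 1 / (|τ + a| + 2 / t) ^ 2) * M :=
          mul_le_mul (norm_truncSinFourier_sq_le ht ha τ) (hyM (by linarith) (by linarith))
            hy.le (by positivity)
      _ = _ := by ring
  · have hfar : t * a ≤ 2 ∨ a / 2 ≤ |(|τ| - a)| := by
      rw [not_and_or, not_lt, not_lt] at hstrip
      exact hstrip
    refine le_add_left ?_
    rw [← ENNReal.ofReal_mul (by positivity)]
    apply ENNReal.ofReal_le_ofReal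
    calc _ ≤ 200 * (t / a) / (|τ| + a) ^ 2 * y := by
          gcongr
          exact norm_truncSinFourier_sq_le_of_far ht ha hfar
      _ = _ := by ring

theorem lintegral_ofReal_inv_abs_sub_add_sq_le {c : ℝ} (hc : 0 < c) (d : ℝ) :
    ∫⁻ x, ENNReal.ofReal (1 / (|x - d| + c) ^ 2) ≤ ENNReal.ofReal (π / c) := by
  have hle : ∀ x : ℝ, 1 / (|x| + c) ^ 2 ≤ c⁻¹ ^ 2 * (1 + (x * c⁻¹) ^ 2)⁻¹ := fun x => by
    rw [show c⁻¹ ^ 2 * (1 + (x * c⁻¹) ^ 2)⁻¹ = 1 / (c ^ 2 + x ^ 2) by field_simp]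
    apply one_div_le_one_div_of_le (by positivity)
    nlinarith [abs_nonneg x, sq_abs x]
  have hint : Integrable fun x : ℝ => c⁻¹ ^ 2 * (1 + (x * c⁻¹) ^ 2)⁻¹ :=
    (integrable_inv_one_add_sq.comp_mul_right' (inv_ne_zero hc.ne')).const_mul _
  calc _ = ∫⁻ x, ENNReal.ofReal (1 / (|x| + c) ^ 2) :=
        lintegral_sub_right_eq_self (fun x => ENNReal.ofReal (1 / (|x| + c) ^ 2)) d
    _ ≤ ∫⁻ x, ENNReal.ofReal (c⁻¹ ^ 2 * (1 + (x * c⁻¹) ^ 2)⁻¹) :=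
        lintegral_mono fun x => ENNReal.ofReal_le_ofReal (hle x)
    _ = ENNReal.ofReal (∫ x, c⁻¹ ^ 2 * (1 + (x * c⁻¹) ^ 2)⁻¹) :=
        (ofReal_integral_eq_lintegral_ofReal hint (ae_of_all _ fun x => by positivity)).symm
    _ = ENNReal.ofReal (π / c) := by
        rw [integral_const_mul, Measure.integral_comp_mul_right (fun y => (1 + y ^ 2)⁻¹),
          integral_univ_inv_one_add_sq, inv_inv, abs_of_pos hc, smul_eq_mul]
        field_simp

theorem lintegral_ofReal_mul_inv_abs_sub_add_sq_pair_le {c K : ℝ} (hc : 0 < c) (hK : 0 ≤ K)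
    (d : ℝ) :
    ∫⁻ x, ENNReal.ofReal (K * (1 / (|x - d| + c) ^ 2 + 1 / (|x + d| + c) ^ 2))
      ≤ ENNReal.ofReal (2 * π * K / c) := by
  have hsplit : ∀ x, ENNReal.ofReal (K * (1 / (|x - d| + c) ^ 2 + 1 / (|x + d| + c) ^ 2))
      = ENNReal.ofReal K * (ENNReal.ofReal (1 / (|x - d| + c) ^ 2)
        + ENNReal.ofReal (1 / (|x + d| + c) ^ 2)) := fun x => by
    rw [ENNReal.ofReal_mul hK, ENNReal.ofReal_add (by positivity) (by positivity)]
  simp only [hsplit]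
  rw [lintegral_const_mul' _ _ ENNReal.ofReal_ne_top, lintegral_add_left (by fun_prop)]
  have h₂ := lintegral_ofReal_inv_abs_sub_add_sq_le hc (-d)
  simp only [sub_neg_eq_add] at h₂
  calc _ ≤ ENNReal.ofReal K * (ENNReal.ofReal (π / c) + ENNReal.ofReal (π / c)) := by
        gcongr
        exact lintegral_ofReal_inv_abs_sub_add_sq_le hc d
    _ = _ := by
        rw [← ENNReal.ofReal_add (by positivity) (by positivity), ← ENNReal.ofReal_mul hK]
        ring_nf

theorem exists_le_mul_of_mem_Icc {η : ℝ → ℝ}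
    (hC : ∀ l : ℝ, 0 < l → ∃ C : ℝ, 0 < C ∧ ∀ τ : ℝ, 0 < τ → η (l * τ) ≤ C * η τ)
    (hmono : AntitoneOn η (Ioi 0) ∨ MonotoneOn η (Ioi 0)) :
    ∃ M : ℝ, 0 < M ∧ ∀ a : ℝ, 0 < a → ∀ x ∈ Icc (a / 2) (3 * a / 2), η x ≤ M * η a := by
  rcases hmono with hanti | hmono
  · obtain ⟨C, hC0, hCle⟩ := hC (1 / 2) (by norm_num)
    refine ⟨C, hC0, fun a ha x hx => ?_⟩
    calc η x ≤ η (1 / 2 * a) :=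
          hanti (show 0 < 1 / 2 * a by positivity) (show 0 < x by linarith [hx.1])
            (by linarith [hx.1])
      _ ≤ C * η a := hCle a ha
  · obtain ⟨C, hC0, hCle⟩ := hC (3 / 2) (by norm_num)
    refine ⟨C, hC0, fun a ha x hx => ?_⟩
    calc η x ≤ η (3 / 2 * a) :=
          hmono (show 0 < x by linarith [hx.1]) (show 0 < 3 / 2 * a by positivity)
            (by linarith [hx.2])
      _ ≤ C * η a := hCle a ha

theorem ofReal_le_lintegral_div_sq_of_le_on_Icc {η : ℝ → ℝ} {a u v : ℝ} (ha : 0 < a) (hu : 0 < u)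
    (hv : v ≤ 2 * a) (huv : a / 2 ≤ v - u) (hηa : 0 ≤ η a) (hη : ∀ τ ∈ Icc u v, η a ≤ η τ) :
    ENNReal.ofReal (η a / (18 * a)) ≤ ∫⁻ τ, ENNReal.ofReal (η |τ| / (|τ| + a) ^ 2) := by
  calc _ ≤ ENNReal.ofReal (η a / (9 * a ^ 2)) * volume (Icc u v) := by
        rw [Real.volume_Icc, ← ENNReal.ofReal_mul (by positivity)]
        apply ENNReal.ofReal_le_ofReal
        calc η a / (18 * a) = η a / (9 * a ^ 2) * (a / 2) := by field_simp; ring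
          _ ≤ _ := by gcongr
    _ = ∫⁻ τ, (Icc u v).indicator (fun _ => ENNReal.ofReal (η a / (9 * a ^ 2))) τ :=
        (lintegral_indicator_const measurableSet_Icc _).symm
    _ ≤ _ := lintegral_mono <| indicator_le fun τ hτ => by
        have hτ0 : 0 < τ := hu.trans_le hτ.1
        rw [abs_of_pos hτ0]
        apply ENNReal.ofReal_le_ofReal
        apply div_le_div₀ (hηa.trans (hη τ hτ)) (hη τ hτ) (by positivity)
        nlinarith [hτ.2]

theorem ofReal_le_lintegral_div_sq {η : ℝ → ℝ} {a : ℝ} (ha : 0 < a) (hηa : 0 ≤ η a)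
    (hmono : AntitoneOn η (Ioi 0) ∨ MonotoneOn η (Ioi 0)) :
    ENNReal.ofReal (η a / (18 * a)) ≤ ∫⁻ τ, ENNReal.ofReal (η |τ| / (|τ| + a) ^ 2) := by
  rcases hmono with hanti | hmono
  · exact ofReal_le_lintegral_div_sq_of_le_on_Icc (u := a / 2) (v := a) ha (by positivity)
      (by linarith) (by linarith) hηa fun τ hτ => hanti (show 0 < τ by linarith [hτ.1]) ha hτ.2
  · exact ofReal_le_lintegral_div_sq_of_le_on_Icc (u := a) (v := 2 * a) ha ha le_rfl (by linarith)
      hηa fun τ hτ => hmono ha (ha.trans_le hτ.1) hτ.1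

theorem lintegral_strip_le_mul_lintegral_div_sq {η : ℝ → ℝ} {t a M : ℝ} (ht : 0 < t) (ha : 0 < a)
    (hM : 0 ≤ M) (hηa : 0 ≤ η a) (hmono : AntitoneOn η (Ioi 0) ∨ MonotoneOn η (Ioi 0)) :
    ∫⁻ τ, ENNReal.ofReal (8 * (M * η a) / a ^ 2 *
        (1 / (|τ - a| + 2 / t) ^ 2 + 1 / (|τ + a| + 2 / t) ^ 2))
      ≤ ENNReal.ofReal (144 * π * M * t * (1 / a)) *
        ∫⁻ τ, ENNReal.ofReal (η |τ| / (|τ| + a) ^ 2) := by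
  calc _ ≤ ENNReal.ofReal (2 * π * (8 * (M * η a) / a ^ 2) / (2 / t)) :=
        lintegral_ofReal_mul_inv_abs_sub_add_sq_pair_le (by positivity) (by positivity) a
    _ = ENNReal.ofReal (144 * π * M * t * (1 / a)) * ENNReal.ofReal (η a / (18 * a)) := by
        rw [← ENNReal.ofReal_mul (by positivity)]
        congr 1
        field_simp
        ring
    _ ≤ _ := by gcongr; exact ofReal_le_lintegral_div_sq ha hηa hmono

theorem stmt_7_general (η : ℝ → ℝ)
    (hpos : ∀ τ : ℝ, 0 < τ → 0 < η τ)
    (hC : ∀ l : ℝ, 0 < l → ∃ C : ℝ, 0 < C ∧ ∀ τ : ℝ, 0 < τ → η (l * τ) ≤ C * η τ)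
    (hmono : (∀ x y : ℝ, 0 < x → x ≤ y → η y ≤ η x)
      ∨ (∀ x y : ℝ, 0 < x → x ≤ y → η x ≤ η y)) :
    ∃ C : ℝ, 0 < C ∧ ∀ t a : ℝ, 0 < t → 0 < a →
      (∫⁻ τ : ℝ, ENNReal.ofReal
          (‖∫ s in (0:ℝ)..t, Complex.exp (-(τ * Complex.I * s))
              * ((Real.sin (s * a) / a : ℝ) : ℂ)‖ ^ 2 * η |τ|))
        ≤ ENNReal.ofReal (C * t * (1 / a)) *
          ∫⁻ τ : ℝ, ENNReal.ofReal (η |τ| / (|τ| + a) ^ 2) := by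
  have hmono' : AntitoneOn η (Ioi 0) ∨ MonotoneOn η (Ioi 0) :=
    hmono.imp (fun h x hx _ _ hxy => h x _ hx hxy) (fun h x hx _ _ hxy => h x _ hx hxy)
  obtain ⟨M, hM, hηM⟩ := exists_le_mul_of_mem_Icc hC hmono'
  refine ⟨144 * π * M + 200, by positivity, fun t a ht ha => ?_⟩
  have hstrip := lintegral_strip_le_mul_lintegral_div_sq ht ha hM.le (hpos a ha).le hmono'
  calc _ ≤ ∫⁻ τ, (ENNReal.ofReal (8 * (M * η a) / a ^ 2 *
          (1 / (|τ - a| + 2 / t) ^ 2 + 1 / (|τ + a| + 2 / t) ^ 2))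
          + ENNReal.ofReal (200 * (t / a)) * ENNReal.ofReal (η |τ| / (|τ| + a) ^ 2)) :=
        lintegral_mono fun τ => ofReal_norm_truncSinFourier_sq_mul_le ht ha τ
          fun h₁ h₂ => hηM a ha |τ| ⟨h₁.le, h₂.le⟩
    _ = _ := by
        rw [lintegral_add_left (by fun_prop), lintegral_const_mul' _ _ ENNReal.ofReal_ne_top]
    _ ≤ _ := add_le_add hstrip le_rfl
    _ = _ := by
        rw [← add_mul, ← ENNReal.ofReal_add (by positivity) (by positivity)]
        congr 2
        ring

/-- Lemma 6.2: upper bound `N_t(a) ≤ C t (1/a) ∫ η(|τ|)/(|τ|+a)² dτ` for the hyperbolic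
quantity, when `η` satisfies condition (C) and is monotone on `(0,∞)`. -/
theorem stmt_7 (η : ℝ → ℝ)
    (hmeas : Measurable η) (hpos : ∀ τ : ℝ, 0 < τ → 0 < η τ)
    (hC : ∀ l : ℝ, 0 < l → ∃ C : ℝ, 0 < C ∧ ∀ τ : ℝ, 0 < τ → η (l * τ) ≤ C * η τ)
    (hmono : (∀ x y : ℝ, 0 < x → x ≤ y → η y ≤ η x)
      ∨ (∀ x y : ℝ, 0 < x → x ≤ y → η x ≤ η y)) :
    ∃ C : ℝ, 0 < C ∧ ∀ t a : ℝ, 0 < t → 0 < a →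
      (∫⁻ τ : ℝ, ENNReal.ofReal
          (‖∫ s in (0:ℝ)..t, Complex.exp (-(τ * Complex.I * s))
              * ((Real.sin (s * a) / a : ℝ) : ℂ)‖ ^ 2 * η |τ|))
        ≤ ENNReal.ofReal (C * t * (1 / a)) *
          ∫⁻ τ : ℝ, ENNReal.ofReal (η |τ| / (|τ| + a) ^ 2) :=
  stmt_7_general η hpos hC hmono
end

section
/- Let η : (0,∞) → (0,∞) be a measurable function satisfying condition (C), which is either non-increasing on (0,∞) or non-decreasing on (0,∞), and such that ∫_ℝ η(|τ|)/(1+τ²) dτ < ∞. For t > 0 and a > 0 set N_t(a) := ∫_ℝ |∫_0^t e^{−iτs} (sin(sa)/a) ds|² η(|τ|) dτ. Then for every t > 0 there exists a constant D_t^{(1)} > 0 (depending on t and η) such that for every a > 0: N_t(a) ≤ D_t^{(1)} (1/√(1+a²)) ∫_ℝ η(|τ|)/(|τ| + √(1+a²))² dτ. -/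
/-!
Write `F(τ)` for the inner integral and `b = √(1 + a²)`. For `a ≤ 1`, `|F(τ)| ≤ t²` and, after an
integration by parts, `|τ| |F(τ)| ≤ 2t`; hence `|F(τ)|² ≲ (1 + τ²)⁻¹ ≲ (|τ| + b)⁻²` pointwise.

For `a ≥ 1`, expanding `sin` into exponentials writes `F` through two truncated Fourier integrals of
`1` at `τ ∓ a`, so `|F(τ)|² ≲ a⁻² ((1 + (τ - a)²)⁻¹ + (1 + (τ + a)²)⁻¹)`; by symmetry only the first
term matters. Away from `a` this Lorentzian is `≲ (|τ| + b)⁻²`. Near `a`, condition (C) and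
monotonicity make `η` comparable to `η(a)`, so that piece is `≲ η(a)`; and restricting the
right-hand integral to `[a/2, a]` shows `η(a) ≲ a ∫ η(|τ|) / (|τ| + b)² dτ`.
-/

open MeasureTheory Complex Set

namespace HyperbolicBound

theorem norm_cexp_neg_mul_I_mul (τ s : ℝ) : ‖cexp (-(τ * I * s))‖ = 1 := by
  rw [show -((τ : ℂ) * I * s) = ((-(τ * s) : ℝ) : ℂ) * I by push_cast; ring,
    norm_exp_ofReal_mul_I]

theorem abs_mul_norm_integral_cexp_mul_le {f f' : ℝ → ℂ} {M : ℝ} (τ t : ℝ)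
    (hf : ∀ s, HasDerivAt f (f' s) s) (hf' : IntervalIntegrable f' volume 0 t)
    (hM : ∀ s, ‖f' s‖ ≤ M) :
    |τ| * ‖∫ s in (0 : ℝ)..t, cexp (-(τ * I * s)) * f s‖ ≤ ‖f 0‖ + ‖f t‖ + M * |t| := by
  rcases eq_or_ne τ 0 with rfl | hτ
  · have := (norm_nonneg _).trans (hM 0)
    simp only [abs_zero, zero_mul]
    positivity
  set c : ℂ := -(τ * I)
  have hc : ‖c‖ = |τ| := by simp [c]
  have hc0 : c ≠ 0 := by simpa [c] using hτ
  -- integrate by parts against the primitive `v` of `s ↦ cexp (c * s)`, which has norm `1 / |τ|`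
  set v : ℝ → ℂ := fun s => cexp (c * s) / c
  have hv : ∀ s : ℝ, HasDerivAt v (cexp (c * s)) s := fun s => by
    have := (((hasDerivAt_id (s : ℂ)).const_mul c).cexp.comp_ofReal).div_const c
    simpa [v, mul_div_assoc, div_self hc0] using this
  have hτ0 : 0 < |τ| := abs_pos.mpr hτ
  have hnv : ∀ s : ℝ, ‖v s‖ = |τ|⁻¹ := fun s => by
    rw [norm_div, hc, show c * s = -(τ * I * s) by simp only [c]; ring, norm_cexp_neg_mul_I_mul,
      one_div]
  have hibp := intervalIntegral.integral_mul_deriv_eq_deriv_mul (fun s _ => hf s) (fun s _ => hv s)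
    hf' (by apply Continuous.intervalIntegrable; fun_prop)
  have hrest : ‖∫ s in (0 : ℝ)..t, f' s * v s‖ ≤ M * |τ|⁻¹ * |t| := by
    simpa using intervalIntegral.norm_integral_le_of_norm_le_const (a := 0) (b := t)
      fun s _ => by rw [norm_mul, hnv]; exact mul_le_mul_of_nonneg_right (hM s) (by positivity)
  have hreorder : ∫ s in (0 : ℝ)..t, cexp (-(τ * I * s)) * f s
      = ∫ s in (0 : ℝ)..t, f s * cexp (c * s) := by
    congr 1; ext s; simp only [c]; ring_nf
  rw [hreorder, hibp]
  calc |τ| * ‖f t * v t - f 0 * v 0 - ∫ s in (0 : ℝ)..t, f' s * v s‖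
      ≤ |τ| * (‖f t‖ * |τ|⁻¹ + ‖f 0‖ * |τ|⁻¹ + M * |τ|⁻¹ * |t|) := by
        gcongr
        refine (norm_sub_le _ _).trans (add_le_add ((norm_sub_le _ _).trans ?_) hrest)
        rw [norm_mul, norm_mul, hnv, hnv]
    _ = ‖f 0‖ + ‖f t‖ + M * |t| := by field_simp; ring

theorem norm_integral_cexp_le {t : ℝ} (ht : 0 ≤ t) (u : ℝ) :
    ‖∫ s in (0 : ℝ)..t, cexp (-(u * I * s))‖ ≤ t := by
  simpa [abs_of_nonneg ht] using intervalIntegral.norm_integral_le_of_norm_le_const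
    (a := 0) (b := t) fun s _ => (norm_cexp_neg_mul_I_mul u s).le

theorem abs_mul_norm_integral_cexp_le (t u : ℝ) :
    |u| * ‖∫ s in (0 : ℝ)..t, cexp (-(u * I * s))‖ ≤ 2 := by
  have := abs_mul_norm_integral_cexp_mul_le (f := fun _ => 1) (M := 0) u t
    (fun s => hasDerivAt_const s 1) intervalIntegrable_const (fun _ => norm_zero.le)
  norm_num at this
  linarith

theorem sq_le_div_one_add_sq {x u A B : ℝ} (hx : 0 ≤ x) (hA : x ≤ A) (hB : |u| * x ≤ B) :
    x ^ 2 ≤ (A ^ 2 + B ^ 2) / (1 + u ^ 2) := by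
  rw [le_div_iff₀ (by positivity)]
  have hux : 0 ≤ |u| * x := by positivity
  nlinarith [sq_abs u]

theorem norm_sq_integral_cexp_le {t : ℝ} (ht : 0 ≤ t) (u : ℝ) :
    ‖∫ s in (0 : ℝ)..t, cexp (-(u * I * s))‖ ^ 2 ≤ (t ^ 2 + 4) / (1 + u ^ 2) := by
  simpa [show (2 : ℝ) ^ 2 = 4 by norm_num] using
    sq_le_div_one_add_sq (norm_nonneg _) (norm_integral_cexp_le ht u)
      (abs_mul_norm_integral_cexp_le t u)

/-- The inner integral in `N_t(a)`, as a function of the frequency `τ`. -/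
noncomputable def sinTransform (t a τ : ℝ) : ℂ :=
  ∫ s in (0 : ℝ)..t, cexp (-(τ * I * s)) * ((Real.sin (s * a) / a : ℝ) : ℂ)

theorem abs_sin_mul_div_le (s a : ℝ) : |Real.sin (s * a) / a| ≤ |s| := by
  rcases eq_or_ne a 0 with rfl | ha
  · simp
  rw [abs_div, div_le_iff₀ (abs_pos.mpr ha), ← abs_mul]
  exact Real.abs_sin_le_abs

theorem norm_sinTransform_le {t : ℝ} (ht : 0 ≤ t) (a τ : ℝ) : ‖sinTransform t a τ‖ ≤ t ^ 2 := by
  have := intervalIntegral.norm_integral_le_of_norm_le_const (a := 0) (b := t) (C := t)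
    (f := fun s : ℝ => cexp (-(τ * I * s)) * ((Real.sin (s * a) / a : ℝ) : ℂ)) fun s hs => by
      rw [Set.uIoc_of_le ht] at hs
      rw [norm_mul, norm_cexp_neg_mul_I_mul, one_mul, norm_real, Real.norm_eq_abs]
      exact (abs_sin_mul_div_le s a).trans (by rw [abs_of_pos hs.1]; exact hs.2)
  rwa [sub_zero, abs_of_nonneg ht, ← sq] at this

theorem abs_mul_norm_sinTransform_le {t a : ℝ} (ht : 0 ≤ t) (ha : a ≠ 0) (τ : ℝ) :
    |τ| * ‖sinTransform t a τ‖ ≤ 2 * t := by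
  have hf : ∀ s : ℝ, HasDerivAt (fun s : ℝ => ((Real.sin (s * a) / a : ℝ) : ℂ))
      ((Real.cos (s * a) : ℝ) : ℂ) s := fun s => by
    have := (((hasDerivAt_id s).mul_const a).sin.div_const a).ofReal_comp
    simpa [mul_div_assoc, div_self ha] using this
  have := abs_mul_norm_integral_cexp_mul_le τ t hf
    (by apply Continuous.intervalIntegrable; fun_prop) (M := 1)
    (fun s => by rw [norm_real, Real.norm_eq_abs]; exact Real.abs_cos_le_one _)
  have hft : ‖((Real.sin (t * a) / a : ℝ) : ℂ)‖ ≤ t := by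
    rw [norm_real, Real.norm_eq_abs]; exact (abs_sin_mul_div_le t a).trans_eq (abs_of_nonneg ht)
  simp only [zero_mul, Real.sin_zero, zero_div, Complex.ofReal_zero, norm_zero, zero_add,
    one_mul, abs_of_nonneg ht] at this
  unfold sinTransform
  linarith

theorem norm_sinTransform_le_div {a : ℝ} (ha : 0 < a) (t τ : ℝ) :
    ‖sinTransform t a τ‖ ≤ (‖∫ s in (0 : ℝ)..t, cexp (-((τ - a : ℝ) * I * s))‖
      + ‖∫ s in (0 : ℝ)..t, cexp (-((τ + a : ℝ) * I * s))‖) / (2 * a) := by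
  have ha' : (a : ℂ) ≠ 0 := by exact_mod_cast ha.ne'
  have hsplit : ∀ s : ℝ, cexp (-(τ * I * s)) * ((Real.sin (s * a) / a : ℝ) : ℂ)
      = I / (2 * a) * (cexp (-((τ + a : ℝ) * I * s)) - cexp (-((τ - a : ℝ) * I * s))) := by
    intro s
    have hp : cexp (-((τ + a : ℝ) * I * s)) = cexp (-(τ * I * s)) * cexp (-((s * a : ℝ) * I)) := by
      rw [← Complex.exp_add]; push_cast; ring_nf
    have hm : cexp (-((τ - a : ℝ) * I * s)) = cexp (-(τ * I * s)) * cexp ((s * a : ℝ) * I) := by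
      rw [← Complex.exp_add]; push_cast; ring_nf
    rw [hp, hm, Complex.ofReal_div, Complex.ofReal_sin, Complex.sin]
    field_simp
  unfold sinTransform
  rw [intervalIntegral.integral_congr fun s _ => hsplit s, intervalIntegral.integral_const_mul,
    intervalIntegral.integral_sub (by apply Continuous.intervalIntegrable; fun_prop)
      (by apply Continuous.intervalIntegrable; fun_prop),
    norm_mul, norm_div, norm_I, norm_mul, Complex.norm_ofNat, norm_real, Real.norm_eq_abs,
    abs_of_pos ha, div_mul_eq_mul_div, one_mul, add_comm (‖_‖)]
  gcongr
  exact norm_sub_le _ _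

theorem norm_sq_sinTransform_le {t a : ℝ} (ht : 0 ≤ t) (ha : 0 < a) (τ : ℝ) :
    ‖sinTransform t a τ‖ ^ 2
      ≤ (t ^ 2 + 4) / (2 * a ^ 2) * ((1 + (τ - a) ^ 2)⁻¹ + (1 + (τ + a) ^ 2)⁻¹) := by
  have hm := norm_sq_integral_cexp_le ht (τ - a)
  have hp := norm_sq_integral_cexp_le ht (τ + a)
  set x := ‖∫ s in (0 : ℝ)..t, cexp (-((τ - a : ℝ) * I * s))‖
  set y := ‖∫ s in (0 : ℝ)..t, cexp (-((τ + a : ℝ) * I * s))‖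
  calc ‖sinTransform t a τ‖ ^ 2 ≤ ((x + y) / (2 * a)) ^ 2 := by
        gcongr; exact norm_sinTransform_le_div ha t τ
    _ ≤ (x ^ 2 + y ^ 2) / (2 * a ^ 2) := by
        rw [div_pow, div_le_div_iff₀ (by positivity) (by positivity)]
        nlinarith [sq_nonneg (x - y), sq_nonneg a]
    _ ≤ _ := by
        rw [div_mul_eq_mul_div, mul_add, ← div_eq_mul_inv, ← div_eq_mul_inv]
        gcongr

theorem ofReal_mul_le_ofReal_mul {x y : ℝ} (e : ℝ) (hx : 0 ≤ x) (hxy : x ≤ y) :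
    ENNReal.ofReal (x * e) ≤ ENNReal.ofReal (y * e) := by
  rcases le_or_gt e 0 with he | he
  · rw [ENNReal.ofReal_of_nonpos (mul_nonpos_of_nonneg_of_nonpos hx he)]
    exact bot_le
  · exact ENNReal.ofReal_le_ofReal (by gcongr)

theorem lintegral_ofReal_inv_one_add_sq_sub (a : ℝ) :
    ∫⁻ τ : ℝ, ENNReal.ofReal (1 + (τ - a) ^ 2)⁻¹ = ENNReal.ofReal Real.pi := by
  rw [lintegral_sub_right_eq_self (fun τ : ℝ => ENNReal.ofReal (1 + τ ^ 2)⁻¹) a,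
    ← ofReal_integral_eq_lintegral_ofReal integrable_inv_one_add_sq
      (ae_of_all _ fun _ => by positivity), integral_univ_inv_one_add_sq]

section Weight

variable {η : ℝ → ℝ}

theorem exists_le_mul_of_le_two_mul
    (hC : ∀ l : ℝ, 0 < l → ∃ C : ℝ, 0 < C ∧ ∀ τ : ℝ, 0 < τ → η (l * τ) ≤ C * η τ)
    (hmono : (∀ x y : ℝ, 0 < x → x ≤ y → η y ≤ η x) ∨ (∀ x y : ℝ, 0 < x → x ≤ y → η x ≤ η y)) :
    ∃ C : ℝ, 0 < C ∧ ∀ x y : ℝ, 0 < x → 0 < y → x ≤ 2 * y → y ≤ 2 * x → η x ≤ C * η y := by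
  rcases hmono with hanti | hmono
  · obtain ⟨C, hC0, hCη⟩ := hC (1 / 2) one_half_pos
    refine ⟨C, hC0, fun x y hx hy _ hyx => ?_⟩
    calc η x ≤ η (1 / 2 * y) := hanti _ _ (by positivity) (by linarith)
      _ ≤ C * η y := hCη y hy
  · obtain ⟨C, hC0, hCη⟩ := hC 2 two_pos
    refine ⟨C, hC0, fun x y hx hy hxy _ => ?_⟩
    calc η x ≤ η (2 * y) := hmono _ _ hx hxy
      _ ≤ C * η y := hCη y hy

noncomputable def weightIntegral (η : ℝ → ℝ) (b : ℝ) : ENNReal :=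
  ∫⁻ τ : ℝ, ENNReal.ofReal (η |τ| / (|τ| + b) ^ 2)

theorem ofReal_le_mul_weightIntegral (hpos : ∀ τ : ℝ, 0 < τ → 0 < η τ) {C : ℝ} (hC0 : 0 < C)
    (hcomp : ∀ x y : ℝ, 0 < x → 0 < y → x ≤ 2 * y → y ≤ 2 * x → η x ≤ C * η y)
    {a b : ℝ} (ha : 0 < a) (hb0 : 0 ≤ b) (hb : b ≤ 2 * a) :
    ENNReal.ofReal (η a) ≤ ENNReal.ofReal (18 * C * a) * weightIntegral η b := by
  have hpt : ∀ τ ∈ Icc (a / 2) a, ENNReal.ofReal (η a / (9 * C * a ^ 2))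
      ≤ ENNReal.ofReal (η |τ| / (|τ| + b) ^ 2) := fun τ ⟨hτ₁, hτ₂⟩ => by
    have hτ0 : 0 < τ := by linarith
    rw [abs_of_pos hτ0]
    refine ENNReal.ofReal_le_ofReal ?_
    rw [div_le_div_iff₀ (by positivity) (by positivity)]
    have hη := hcomp a τ ha hτ0 (by linarith) (by linarith)
    have hsq : (τ + b) ^ 2 ≤ 9 * a ^ 2 := by nlinarith
    nlinarith [hpos τ hτ0, hpos a ha]
  calc ENNReal.ofReal (η a)
      = ENNReal.ofReal (18 * C * a) * (ENNReal.ofReal (η a / (9 * C * a ^ 2))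
          * volume (Icc (a / 2) a)) := by
        rw [Real.volume_Icc, ← ENNReal.ofReal_mul (by have := hpos a ha; positivity),
          ← ENNReal.ofReal_mul (by positivity)]
        congr 1
        field_simp
        ring
    _ ≤ ENNReal.ofReal (18 * C * a)
          * ∫⁻ τ in Icc (a / 2) a, ENNReal.ofReal (η |τ| / (|τ| + b) ^ 2) := by
        rw [← setLIntegral_const]
        gcongr _ * ?_
        exact setLIntegral_mono' measurableSet_Icc hpt
    _ ≤ _ := by
        gcongr
        exact setLIntegral_le_lintegral _ _

theorem setLIntegral_Ioo_lorentzian_mul_le {C : ℝ}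
    (hcomp : ∀ x y : ℝ, 0 < x → 0 < y → x ≤ 2 * y → y ≤ 2 * x → η x ≤ C * η y)
    {a : ℝ} (ha : 0 < a) :
    ∫⁻ τ in Ioo (a / 2) (3 * a / 2), ENNReal.ofReal ((1 + (τ - a) ^ 2)⁻¹ * η |τ|)
      ≤ ENNReal.ofReal (C * η a) * ENNReal.ofReal Real.pi := by
  calc _ ≤ ∫⁻ τ in Ioo (a / 2) (3 * a / 2),
        ENNReal.ofReal (C * η a) * ENNReal.ofReal (1 + (τ - a) ^ 2)⁻¹ := by
        refine setLIntegral_mono' measurableSet_Ioo fun τ ⟨hτ₁, hτ₂⟩ => ?_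
        have hτ0 : 0 < τ := by linarith
        rw [← ENNReal.ofReal_mul' (by positivity), mul_comm (C * η a), abs_of_pos hτ0]
        exact ENNReal.ofReal_le_ofReal (mul_le_mul_of_nonneg_left
          (hcomp τ a hτ0 ha (by linarith) (by linarith)) (by positivity))
    _ ≤ ∫⁻ τ, ENNReal.ofReal (C * η a) * ENNReal.ofReal (1 + (τ - a) ^ 2)⁻¹ :=
        setLIntegral_le_lintegral _ _
    _ = _ := by
        rw [lintegral_const_mul' _ _ ENNReal.ofReal_ne_top, lintegral_ofReal_inv_one_add_sq_sub]

theorem setLIntegral_compl_Ioo_lorentzian_mul_le {a b : ℝ} (ha : 0 < a) (hb0 : 0 < b)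
    (hb : b ≤ 2 * a) :
    ∫⁻ τ in (Ioo (a / 2) (3 * a / 2))ᶜ, ENNReal.ofReal ((1 + (τ - a) ^ 2)⁻¹ * η |τ|)
      ≤ 49 * weightIntegral η b := by
  rw [weightIntegral, ← lintegral_const_mul' _ _ (by norm_num)]
  refine (setLIntegral_mono' measurableSet_Ioo.compl fun τ hτ => ?_).trans
    (setLIntegral_le_lintegral _ _)
  have hfar : a / 2 ≤ |τ - a| := by
    simp only [mem_compl_iff, mem_Ioo, not_and_or, not_lt] at hτ
    rcases hτ with h | h
    · rw [abs_of_nonpos (by linarith)]; linarith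
    · rw [abs_of_nonneg (by linarith)]; linarith
  have h7 : |τ| + b ≤ 7 * |τ - a| := by
    linarith [abs_sub_abs_le_abs_sub τ a, abs_of_pos ha]
  have hL : (1 + (τ - a) ^ 2)⁻¹ ≤ 49 * ((|τ| + b) ^ 2)⁻¹ := by
    rw [← div_eq_mul_inv, inv_eq_one_div, div_le_div_iff₀ (by positivity) (by positivity)]
    nlinarith [sq_abs (τ - a), abs_nonneg τ]
  calc ENNReal.ofReal ((1 + (τ - a) ^ 2)⁻¹ * η |τ|)
      ≤ ENNReal.ofReal (49 * ((|τ| + b) ^ 2)⁻¹ * η |τ|) :=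
        ofReal_mul_le_ofReal_mul _ (by positivity) hL
    _ = 49 * ENNReal.ofReal (η |τ| / (|τ| + b) ^ 2) := by
        rw [← ENNReal.ofReal_ofNat, ← ENNReal.ofReal_mul (by norm_num)]
        ring_nf

theorem lintegral_lorentzian_mul_le (hpos : ∀ τ : ℝ, 0 < τ → 0 < η τ) {C : ℝ} (hC0 : 0 < C)
    (hcomp : ∀ x y : ℝ, 0 < x → 0 < y → x ≤ 2 * y → y ≤ 2 * x → η x ≤ C * η y)
    {a b : ℝ} (ha : 1 ≤ a) (hb0 : 0 < b) (hb : b ≤ 2 * a) :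
    ∫⁻ τ, ENNReal.ofReal ((1 + (τ - a) ^ 2)⁻¹ * η |τ|)
      ≤ ENNReal.ofReal ((18 * Real.pi * C ^ 2 + 49) * a) * weightIntegral η b := by
  have ha0 : 0 < a := by linarith
  rw [← lintegral_add_compl _ (measurableSet_Ioo (a := a / 2) (b := 3 * a / 2))]
  calc _ ≤ ENNReal.ofReal (C * η a) * ENNReal.ofReal Real.pi + 49 * weightIntegral η b :=
        add_le_add (setLIntegral_Ioo_lorentzian_mul_le hcomp ha0)
          (setLIntegral_compl_Ioo_lorentzian_mul_le ha0 hb0 hb)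
    _ ≤ ENNReal.ofReal (C * Real.pi) * (ENNReal.ofReal (18 * C * a) * weightIntegral η b)
          + ENNReal.ofReal (49 * a) * weightIntegral η b := by
        rw [ENNReal.ofReal_mul hC0.le, mul_right_comm, ← ENNReal.ofReal_mul hC0.le]
        gcongr
        · exact ofReal_le_mul_weightIntegral hpos hC0 hcomp ha0 hb0.le hb
        · rw [← ENNReal.ofReal_ofNat]
          exact ENNReal.ofReal_le_ofReal (by linarith)
    _ = _ := by
        rw [← mul_assoc, ← ENNReal.ofReal_mul (by positivity), ← add_mul,
          ← ENNReal.ofReal_add (by positivity) (by positivity)]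
        ring_nf

theorem lintegral_lorentzian_add_mul_eq (a : ℝ) :
    ∫⁻ τ, ENNReal.ofReal ((1 + (τ + a) ^ 2)⁻¹ * η |τ|)
      = ∫⁻ τ, ENNReal.ofReal ((1 + (τ - a) ^ 2)⁻¹ * η |τ|) := by
  rw [← lintegral_neg_eq_self]
  simp only [abs_neg, show ∀ τ : ℝ, (-τ + a) ^ 2 = (τ - a) ^ 2 from fun τ => by ring]

theorem lintegral_sinTransform_le_of_le_one (η : ℝ → ℝ) {t a : ℝ} (ht : 0 ≤ t) (ha : 0 < a)
    (ha1 : a ≤ 1) :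
    ∫⁻ τ, ENNReal.ofReal (‖sinTransform t a τ‖ ^ 2 * η |τ|)
      ≤ ENNReal.ofReal (8 * (t ^ 4 + 4 * t ^ 2) / √(1 + a ^ 2))
        * weightIntegral η √(1 + a ^ 2) := by
  set b := √(1 + a ^ 2)
  set c := t ^ 4 + 4 * t ^ 2
  have hb0 : 0 < b := by positivity
  have hb : b ≤ 2 := Real.sqrt_le_iff.mpr ⟨by norm_num, by nlinarith⟩
  have hbsq : b ^ 2 = 1 + a ^ 2 := Real.sq_sqrt (by positivity)
  have hpt : ∀ τ : ℝ, ‖sinTransform t a τ‖ ^ 2 ≤ 8 * c / b * ((|τ| + b) ^ 2)⁻¹ := fun τ => by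
    calc ‖sinTransform t a τ‖ ^ 2 ≤ c / (1 + τ ^ 2) := by
          convert sq_le_div_one_add_sq (norm_nonneg _) (norm_sinTransform_le ht a τ)
            (abs_mul_norm_sinTransform_le ht ha.ne' τ) using 2
          ring
      _ ≤ 4 * c / (|τ| + b) ^ 2 := by
          rw [div_le_div_iff₀ (by positivity) (by positivity)]
          have hsq : (|τ| + b) ^ 2 ≤ 4 * (1 + τ ^ 2) := by
            nlinarith [sq_nonneg (|τ| - b), sq_abs τ]
          nlinarith [mul_le_mul_of_nonneg_left hsq (show 0 ≤ c by positivity)]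
      _ ≤ 8 * c / b * ((|τ| + b) ^ 2)⁻¹ := by
          rw [← div_eq_mul_inv]
          gcongr
          rw [le_div_iff₀ hb0]
          nlinarith [show 0 ≤ c by positivity]
  calc ∫⁻ τ, ENNReal.ofReal (‖sinTransform t a τ‖ ^ 2 * η |τ|)
      ≤ ∫⁻ τ, ENNReal.ofReal (8 * c / b * (η |τ| / (|τ| + b) ^ 2)) :=
        lintegral_mono fun τ => by
          rw [div_eq_inv_mul (η |τ|), ← mul_assoc]
          exact ofReal_mul_le_ofReal_mul _ (sq_nonneg _) (hpt τ)
    _ = _ := by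
        simp_rw [ENNReal.ofReal_mul (show 0 ≤ 8 * c / b by positivity)]
        exact lintegral_const_mul' _ _ ENNReal.ofReal_ne_top

theorem lintegral_sinTransform_le_of_one_le (hmeas : Measurable η)
    (hpos : ∀ τ : ℝ, 0 < τ → 0 < η τ) {C : ℝ} (hC0 : 0 < C)
    (hcomp : ∀ x y : ℝ, 0 < x → 0 < y → x ≤ 2 * y → y ≤ 2 * x → η x ≤ C * η y)
    {t a : ℝ} (ht : 0 ≤ t) (ha : 1 ≤ a) :
    ∫⁻ τ, ENNReal.ofReal (‖sinTransform t a τ‖ ^ 2 * η |τ|)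
      ≤ ENNReal.ofReal (2 * (t ^ 2 + 4) * (18 * Real.pi * C ^ 2 + 49) / √(1 + a ^ 2))
        * weightIntegral η √(1 + a ^ 2) := by
  have ha0 : 0 < a := by linarith
  set b := √(1 + a ^ 2)
  have hb0 : 0 < b := by positivity
  have hb : b ≤ 2 * a := Real.sqrt_le_iff.mpr ⟨by positivity, by nlinarith⟩
  set K := 18 * Real.pi * C ^ 2 + 49
  set k := t ^ 2 + 4
  have hmeas' : Measurable fun τ : ℝ => ENNReal.ofReal ((1 + (τ - a) ^ 2)⁻¹ * η |τ|) := by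
    fun_prop
  calc ∫⁻ τ, ENNReal.ofReal (‖sinTransform t a τ‖ ^ 2 * η |τ|)
      ≤ ∫⁻ τ, ENNReal.ofReal (k / (2 * a ^ 2)
          * ((1 + (τ - a) ^ 2)⁻¹ * η |τ| + (1 + (τ + a) ^ 2)⁻¹ * η |τ|)) :=
        lintegral_mono fun τ => by
          rw [← add_mul, ← mul_assoc]
          exact ofReal_mul_le_ofReal_mul _ (by positivity) (norm_sq_sinTransform_le ht ha0 τ)
    _ ≤ ENNReal.ofReal (k / (2 * a ^ 2))
          * ((∫⁻ τ, ENNReal.ofReal ((1 + (τ - a) ^ 2)⁻¹ * η |τ|))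
            + ∫⁻ τ, ENNReal.ofReal ((1 + (τ + a) ^ 2)⁻¹ * η |τ|)) := by
        rw [← lintegral_add_left hmeas', ← lintegral_const_mul' _ _ ENNReal.ofReal_ne_top]
        refine lintegral_mono fun τ => ?_
        rw [ENNReal.ofReal_mul (by positivity)]
        gcongr
        exact ENNReal.ofReal_add_le
    _ ≤ ENNReal.ofReal (k / (2 * a ^ 2)) * (2 * (ENNReal.ofReal (K * a) * weightIntegral η b)) := by
        rw [lintegral_lorentzian_add_mul_eq, ← two_mul]
        gcongr
        exact lintegral_lorentzian_mul_le hpos hC0 hcomp ha hb0 hb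
    _ ≤ _ := by
        rw [← mul_assoc, ← mul_assoc, ← ENNReal.ofReal_ofNat, ← ENNReal.ofReal_mul (by positivity),
          ← ENNReal.ofReal_mul (by positivity)]
        gcongr
        rw [show k / (2 * a ^ 2) * 2 * (K * a) = k * K / a by field_simp,
          div_le_div_iff₀ ha0 hb0]
        have : 0 ≤ k * K := by positivity
        nlinarith

end Weight

end HyperbolicBound

open HyperbolicBound

theorem stmt_8_general (η : ℝ → ℝ)
    (hmeas : Measurable η) (hpos : ∀ τ : ℝ, 0 < τ → 0 < η τ)
    (hC : ∀ l : ℝ, 0 < l → ∃ C : ℝ, 0 < C ∧ ∀ τ : ℝ, 0 < τ → η (l * τ) ≤ C * η τ)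
    (hmono : (∀ x y : ℝ, 0 < x → x ≤ y → η y ≤ η x)
      ∨ (∀ x y : ℝ, 0 < x → x ≤ y → η x ≤ η y)) :
    ∀ t : ℝ, 0 < t → ∃ D : ℝ, 0 < D ∧ ∀ a : ℝ, 0 < a →
      (∫⁻ τ : ℝ, ENNReal.ofReal
          (‖∫ s in (0:ℝ)..t, Complex.exp (-(τ * Complex.I * s))
              * ((Real.sin (s * a) / a : ℝ) : ℂ)‖ ^ 2 * η |τ|))
        ≤ ENNReal.ofReal (D * (1 / Real.sqrt (1 + a ^ 2))) *
          ∫⁻ τ : ℝ, ENNReal.ofReal (η |τ| / (|τ| + Real.sqrt (1 + a ^ 2)) ^ 2) := by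
  intro t ht
  obtain ⟨C, hC0, hcomp⟩ := exists_le_mul_of_le_two_mul hC hmono
  set c₁ := 8 * (t ^ 4 + 4 * t ^ 2)
  set c₂ := 2 * (t ^ 2 + 4) * (18 * Real.pi * C ^ 2 + 49)
  have hc₁ : 0 ≤ c₁ := by positivity
  have hc₂ : 0 ≤ c₂ := by positivity
  refine ⟨c₁ + c₂, by positivity, fun a ha => ?_⟩
  have hweaken : ∀ c ≤ c₁ + c₂, ENNReal.ofReal (c / √(1 + a ^ 2)) * weightIntegral η √(1 + a ^ 2)
      ≤ ENNReal.ofReal ((c₁ + c₂) * (1 / √(1 + a ^ 2))) * weightIntegral η √(1 + a ^ 2) :=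
    fun c hc => by rw [mul_one_div]; gcongr
  rcases le_or_gt a 1 with ha1 | ha1
  · exact (lintegral_sinTransform_le_of_le_one η ht.le ha ha1).trans
      (hweaken c₁ (by linarith))
  · exact (lintegral_sinTransform_le_of_one_le hmeas hpos hC0 hcomp ht.le ha1.le).trans
      (hweaken c₂ (by linarith))

/-- Lemma 6.3: upper bound `N_t(a) ≤ D_t (1/√(1+a²)) ∫ η(|τ|)/(|τ|+√(1+a²))² dτ`. -/
theorem stmt_8 (η : ℝ → ℝ)
    (hmeas : Measurable η) (hpos : ∀ τ : ℝ, 0 < τ → 0 < η τ)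
    (hC : ∀ l : ℝ, 0 < l → ∃ C : ℝ, 0 < C ∧ ∀ τ : ℝ, 0 < τ → η (l * τ) ≤ C * η τ)
    (hmono : (∀ x y : ℝ, 0 < x → x ≤ y → η y ≤ η x)
      ∨ (∀ x y : ℝ, 0 < x → x ≤ y → η x ≤ η y))
    (hint : Integrable (fun τ : ℝ => η |τ| / (1 + τ ^ 2))) :
    ∀ t : ℝ, 0 < t → ∃ D : ℝ, 0 < D ∧ ∀ a : ℝ, 0 < a →
      (∫⁻ τ : ℝ, ENNReal.ofReal
          (‖∫ s in (0:ℝ)..t, Complex.exp (-(τ * Complex.I * s))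
              * ((Real.sin (s * a) / a : ℝ) : ℂ)‖ ^ 2 * η |τ|))
        ≤ ENNReal.ofReal (D * (1 / Real.sqrt (1 + a ^ 2))) *
          ∫⁻ τ : ℝ, ENNReal.ofReal (η |τ| / (|τ| + Real.sqrt (1 + a ^ 2)) ^ 2) :=
  stmt_8_general η hmeas hpos hC hmono
end

section
/- Let η : (0,∞) → (0,∞) be a measurable function satisfying condition (C) and which is either non-increasing on (0,∞) or non-decreasing on (0,∞). For t > 0 and a > 0 set N_t(a) := ∫_ℝ |∫_0^t e^{−iτs} (sin(sa)/a) ds|² η(|τ|) dτ. Then there exists a constant C' > 0 (depending only on η) such that for every t > 0 and every a > 0 with t·a ≥ 1: N_t(a) ≥ C' t η(a)/a². -/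
/-!
For `τ` in the window `a < τ ≤ a + 1/(2t)` the imaginary part of the inner integral is
`-(1/a) ∫₀ᵗ sin(τs) sin(as) ds`, and the product-to-sum formula shows that the resonant term
`sin((τ - a)t)/(τ - a) ≈ t` dominates, so the squared modulus is `≳ t²/a²`. On the same window
`η(τ) ≳ η(a)`: trivially if `η` is non-decreasing, and via `η(a) ≤ C η(3a/2)` from (C) if it is
non-increasing. Integrating over the window, of length `1/(2t)`, gives `≳ t η(a)/a²`.
-/

open MeasureTheory Set Real

theorem integral_cos_mul_eq {c : ℝ} (hc : c ≠ 0) (a b : ℝ) :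
    ∫ s in a..b, cos (c * s) = (sin (c * b) - sin (c * a)) / c := by
  rw [intervalIntegral.integral_comp_mul_left (fun u => cos u) hc, integral_cos, smul_eq_mul,
    inv_mul_eq_div]

theorem integral_sin_mul_sin_mul {μ ν : ℝ} (hsub : μ - ν ≠ 0) (hadd : μ + ν ≠ 0) (t : ℝ) :
    ∫ s in (0:ℝ)..t, sin (μ * s) * sin (ν * s)
      = (sin ((μ - ν) * t) / (μ - ν) - sin ((μ + ν) * t) / (μ + ν)) / 2 := by
  have hprod : ∀ s, sin (μ * s) * sin (ν * s) = (cos ((μ - ν) * s) - cos ((μ + ν) * s)) / 2 := by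
    intro s
    rw [sub_mul, add_mul, ← two_mul_sin_mul_sin]
    ring
  have hint : ∀ κ : ℝ, IntervalIntegrable (fun s => cos (κ * s)) volume 0 t := fun κ => by
    apply Continuous.intervalIntegrable; fun_prop
  simp_rw [hprod]
  rw [intervalIntegral.integral_div, intervalIntegral.integral_sub (hint _) (hint _),
    integral_cos_mul_eq hsub, integral_cos_mul_eq hadd]
  simp

theorem im_integral_exp_neg_mul_I_mul_ofReal {f : ℝ → ℝ} (hf : Continuous f) (τ a b : ℝ) :
    (∫ s in a..b, Complex.exp (-(τ * Complex.I * s)) * (f s : ℂ)).im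
      = -∫ s in a..b, sin (τ * s) * f s := by
  have hint : IntervalIntegrable (fun s : ℝ => Complex.exp (-(τ * Complex.I * s)) * (f s : ℂ))
      volume a b := by
    apply Continuous.intervalIntegrable; fun_prop
  rw [← Complex.imCLM_apply, ← Complex.imCLM.intervalIntegral_comp_comm hint,
    ← intervalIntegral.integral_neg]
  congr 1
  ext s
  have hexp : -(τ * Complex.I * s) = ((-(τ * s) : ℝ) : ℂ) * Complex.I := by push_cast; ring
  simp only [Complex.imCLM_apply, Complex.mul_im, hexp, Complex.exp_ofReal_mul_I_im,
    Complex.exp_ofReal_mul_I_re, Complex.ofReal_re, Complex.ofReal_im, sin_neg]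
  ring

/-- On this window the resonant term `sin ((τ - a) t) / (τ - a)` is at least `15 t / 16`
(as `sin x ≥ x - x³/6` with `x ≤ 1/2`), while the other one is at most `1 / (2a) ≤ t / 2`. -/
theorem le_integral_sin_mul_sin_of_mem_Ioc {t a τ : ℝ} (ht : 0 < t) (hta : 1 ≤ t * a)
    (hτ : τ ∈ Ioc a (a + 1 / (2 * t))) :
    7 / 32 * t ≤ ∫ s in (0:ℝ)..t, sin (τ * s) * sin (a * s) := by
  obtain ⟨haτ, hτa⟩ := hτ
  have ha : 0 < a := pos_of_mul_pos_right (one_pos.trans_le hta) ht.le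
  have hsub : 0 < τ - a := sub_pos.mpr haτ
  have hadd : 0 < τ + a := by linarith
  have hx : (τ - a) * t ≤ 1 / 2 := by
    have h : τ - a ≤ 1 / (2 * t) := by linarith
    rw [le_div_iff₀ (by positivity)] at h
    linarith
  have hres : 15 / 16 * t ≤ sin ((τ - a) * t) / (τ - a) := by
    have hpos := mul_pos hsub ht
    have hsq : ((τ - a) * t) ^ 2 ≤ 1 / 4 := by nlinarith
    have hcube : ((τ - a) * t) ^ 3 ≤ (τ - a) * t / 4 := by nlinarith
    rw [le_div_iff₀ hsub]
    linarith [sin_gt_sub_cube hpos]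
  have hnonres : sin ((τ + a) * t) / (τ + a) ≤ t / 2 := by
    rw [div_le_iff₀ hadd]
    nlinarith [sin_le_one ((τ + a) * t)]
  rw [integral_sin_mul_sin_mul hsub.ne' hadd.ne']
  linarith

theorem le_norm_integral_exp_mul_sin {t a τ : ℝ} (ht : 0 < t) (hta : 1 ≤ t * a)
    (hτ : τ ∈ Ioc a (a + 1 / (2 * t))) :
    7 * t / (32 * a) ≤ ‖∫ s in (0:ℝ)..t, Complex.exp (-(τ * Complex.I * s))
      * ((Real.sin (s * a) / a : ℝ) : ℂ)‖ := by
  have ha : 0 < a := pos_of_mul_pos_right (one_pos.trans_le hta) ht.le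
  have him := im_integral_exp_neg_mul_I_mul_ofReal
    (f := fun s => sin (s * a) / a) (by fun_prop) τ 0 t
  simp only [mul_div_assoc', intervalIntegral.integral_div] at him
  calc 7 * t / (32 * a) = 7 / 32 * t / a := by ring
    _ ≤ |(∫ s in (0:ℝ)..t, sin (τ * s) * sin (s * a)) / a| := by
        simp_rw [abs_div, abs_of_pos ha, mul_comm _ a]
        gcongr
        exact (le_integral_sin_mul_sin_of_mem_Ioc ht hta hτ).trans (le_abs_self _)
    _ = |(∫ s in (0:ℝ)..t, Complex.exp (-(τ * Complex.I * s))
          * ((Real.sin (s * a) / a : ℝ) : ℂ)).im| := by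
        rw [him, abs_neg]
    _ ≤ _ := Complex.abs_im_le_norm _

theorem exists_pos_mul_le_of_dilation_bound {η : ℝ → ℝ}
    (hC : ∀ l : ℝ, 0 < l → ∃ C : ℝ, 0 < C ∧ ∀ τ : ℝ, 0 < τ → η (l * τ) ≤ C * η τ)
    (hmono : AntitoneOn η (Ioi 0) ∨ MonotoneOn η (Ioi 0)) {K : ℝ} (hK : 0 < K) :
    ∃ c : ℝ, 0 < c ∧ ∀ a τ : ℝ, 0 < a → a ≤ τ → τ ≤ K * a → c * η a ≤ η τ := by
  rcases hmono with hanti | hmono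
  · obtain ⟨C, hC, hCη⟩ := hC K⁻¹ (inv_pos.mpr hK)
    refine ⟨C⁻¹, inv_pos.mpr hC, fun a τ ha haτ hτK => ?_⟩
    rw [inv_mul_le_iff₀ hC]
    calc η a = η (K⁻¹ * (K * a)) := by rw [inv_mul_cancel_left₀ hK.ne']
      _ ≤ C * η (K * a) := hCη _ (by positivity)
      _ ≤ C * η τ := by
        gcongr
        exact hanti (ha.trans_le haτ) (mem_Ioi.mpr (by positivity)) hτK
  · refine ⟨1, one_pos, fun a τ ha haτ _ => ?_⟩
    rw [one_mul]
    exact hmono ha (ha.trans_le haτ) haτ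

theorem stmt_9_general (η : ℝ → ℝ)
    (hpos : ∀ τ : ℝ, 0 < τ → 0 < η τ)
    (hC : ∀ l : ℝ, 0 < l → ∃ C : ℝ, 0 < C ∧ ∀ τ : ℝ, 0 < τ → η (l * τ) ≤ C * η τ)
    (hmono : (∀ x y : ℝ, 0 < x → x ≤ y → η y ≤ η x)
      ∨ (∀ x y : ℝ, 0 < x → x ≤ y → η x ≤ η y)) :
    ∃ C' : ℝ, 0 < C' ∧ ∀ t a : ℝ, 0 < t → 0 < a → 1 ≤ t * a →
      ENNReal.ofReal (C' * t * η a / a ^ 2)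
        ≤ ∫⁻ τ : ℝ, ENNReal.ofReal
            (‖∫ s in (0:ℝ)..t, Complex.exp (-(τ * Complex.I * s))
                * ((Real.sin (s * a) / a : ℝ) : ℂ)‖ ^ 2 * η |τ|) := by
  obtain ⟨c, hc, hcη⟩ := exists_pos_mul_le_of_dilation_bound hC
    (hmono.imp (fun h x hx y _ => h x y hx) (fun h x hx y _ => h x y hx)) (K := 3 / 2) (by norm_num)
  refine ⟨49 * c / 2048, by positivity, fun t a ht ha hta => ?_⟩
  have hηa := hpos a ha
  set S := Ioc a (a + 1 / (2 * t))
  have hbound : ∀ τ ∈ S, (7 * t / (32 * a)) ^ 2 * (c * η a)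
      ≤ ‖∫ s in (0:ℝ)..t, Complex.exp (-(τ * Complex.I * s))
          * ((Real.sin (s * a) / a : ℝ) : ℂ)‖ ^ 2 * η |τ| := by
    intro τ hτ
    have hwidth : 1 / (2 * t) ≤ a / 2 := by
      rw [div_le_div_iff₀ (by positivity) two_pos]
      linarith
    rw [abs_of_pos (ha.trans hτ.1)]
    gcongr
    · exact le_norm_integral_exp_mul_sin ht hta hτ
    · exact hcη a τ ha hτ.1.le (by linarith [hτ.2])
  calc ENNReal.ofReal (49 * c / 2048 * t * η a / a ^ 2)
      = ENNReal.ofReal ((7 * t / (32 * a)) ^ 2 * (c * η a)) * volume S := by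
        rw [Real.volume_Ioc, ← ENNReal.ofReal_mul (by positivity)]
        congr 1
        field_simp
        ring
    _ = ∫⁻ _ in S, ENNReal.ofReal ((7 * t / (32 * a)) ^ 2 * (c * η a)) :=
        (setLIntegral_const _ _).symm
    _ ≤ _ := setLIntegral_mono' measurableSet_Ioc fun τ hτ => ENNReal.ofReal_le_ofReal (hbound τ hτ)
    _ ≤ _ := setLIntegral_le_lintegral _ _

/-- Lemma 6.4: lower bound `N_t(a) ≥ C' t η(a)/a²` when `t a ≥ 1`. -/
theorem stmt_9 (η : ℝ → ℝ)
    (hmeas : Measurable η) (hpos : ∀ τ : ℝ, 0 < τ → 0 < η τ)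
    (hC : ∀ l : ℝ, 0 < l → ∃ C : ℝ, 0 < C ∧ ∀ τ : ℝ, 0 < τ → η (l * τ) ≤ C * η τ)
    (hmono : (∀ x y : ℝ, 0 < x → x ≤ y → η y ≤ η x)
      ∨ (∀ x y : ℝ, 0 < x → x ≤ y → η x ≤ η y)) :
    ∃ C' : ℝ, 0 < C' ∧ ∀ t a : ℝ, 0 < t → 0 < a → 1 ≤ t * a →
      ENNReal.ofReal (C' * t * η a / a ^ 2)
        ≤ ∫⁻ τ : ℝ, ENNReal.ofReal
            (‖∫ s in (0:ℝ)..t, Complex.exp (-(τ * Complex.I * s))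
                * ((Real.sin (s * a) / a : ℝ) : ℂ)‖ ^ 2 * η |τ|) :=
  stmt_9_general η hpos hC hmono
end

section
/- Let η : (0,∞) → (0,∞) be a measurable function which satisfies either condition (C1) or condition (C2). Then for every K > 0 there exists a constant M_K > 0 such that for all a ≥ K: (1/a) ∫_ℝ η(|τ|)/(|τ| + a)² dτ ≤ M_K η(a)/a². -/
/-!
Fold `ℝ` onto `(0, ∞)` (a factor `2`) and split `(0, ∞)` at `a`. On `(0, a]` bound `(τ + a)²`
below by `a²`, on `(a, ∞)` by `τ²`. On one piece monotonicity of `η` replaces `η τ` by `η a`,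
giving `η a / a` (on the tail via `∫_a^∞ τ⁻² dτ = 1 / a`); on the other the integral condition
gives `D η a / a`. So the half-line integral is `O(η a / a)`.
-/

open MeasureTheory Set ENNReal

/-- Condition (C1): `η` is non-increasing on `(0,∞)` and `∫_0^a η(τ)dτ ≤ D_K a η(a)`
for `a ≥ K`. -/
def CondC1 (η : ℝ → ℝ) : Prop :=
  (∀ x y : ℝ, 0 < x → x ≤ y → η y ≤ η x) ∧
  ∀ K : ℝ, 0 < K → ∃ D : ℝ, 0 < D ∧ ∀ a : ℝ, K ≤ a →
    (∫⁻ τ in Set.Ioc (0:ℝ) a, ENNReal.ofReal (η τ)) ≤ ENNReal.ofReal (D * a * η a)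

/-- Condition (C2): `η` is non-decreasing on `(0,∞)` and `∫_a^∞ τ⁻² η(τ)dτ ≤ D_K a⁻¹ η(a)`
for `a ≥ K`. -/
def CondC2 (η : ℝ → ℝ) : Prop :=
  (∀ x y : ℝ, 0 < x → x ≤ y → η x ≤ η y) ∧
  ∀ K : ℝ, 0 < K → ∃ D : ℝ, 0 < D ∧ ∀ a : ℝ, K ≤ a →
    (∫⁻ τ in Set.Ioi a, ENNReal.ofReal (η τ / τ ^ 2)) ≤ ENNReal.ofReal (D * a⁻¹ * η a)

lemma ofReal_div_le_ofReal_div_of_le {y s t : ℝ} (ht : 0 < t) (hts : t ≤ s) :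
    ENNReal.ofReal (y / s) ≤ ENNReal.ofReal (y / t) := by
  rcases le_total 0 y with hy | hy
  · exact ofReal_le_ofReal (div_le_div_of_nonneg_left hy ht hts)
  · rw [ofReal_of_nonpos (div_nonpos_of_nonpos_of_nonneg hy (ht.trans_le hts).le)]
    exact zero_le

lemma lintegral_comp_abs (g : ℝ → ℝ≥0∞) : ∫⁻ x, g |x| = 2 * ∫⁻ x in Ioi 0, g x := by
  have h_pos : ∫⁻ x in Ioi 0, g |x| = ∫⁻ x in Ioi 0, g x :=
    setLIntegral_congr_fun measurableSet_Ioi fun x hx => by rw [abs_of_pos hx]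
  have h_neg : ∫⁻ x in Iic 0, g |x| = ∫⁻ x in Ioi 0, g |x| := by
    have := (Measure.measurePreserving_neg (volume : Measure ℝ)).setLIntegral_comp_preimage_emb
      measurableEmbedding_neg (fun x => g |x|) (Iic 0)
    rw [← this, neg_preimage, neg_Iic, neg_zero, ← restrict_Ioi_eq_restrict_Ici]
    simp only [abs_neg]
  rw [← lintegral_add_compl _ measurableSet_Iic, compl_Iic, h_neg, h_pos, two_mul]

lemma lintegral_Ioi_div_sq {a : ℝ} (ha : 0 < a) (c : ℝ) :
    ∫⁻ τ in Ioi a, ENNReal.ofReal (c / τ ^ 2) = ENNReal.ofReal (c / a) := by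
  rcases le_total c 0 with hc | hc
  · have h_zero (τ : ℝ) : ENNReal.ofReal (c / τ ^ 2) = 0 :=
      ofReal_of_nonpos (div_nonpos_of_nonpos_of_nonneg hc (sq_nonneg τ))
    simp only [h_zero, lintegral_zero, ofReal_of_nonpos (div_nonpos_of_nonpos_of_nonneg hc ha.le)]
  have h_rpow : ∀ τ ∈ Ioi a, c / τ ^ 2 = c * τ ^ (-2 : ℝ) := fun τ hτ => by
    rw [Real.rpow_neg (ha.trans hτ).le, Real.rpow_two, div_eq_mul_inv]
  rw [setLIntegral_congr_fun measurableSet_Ioi fun τ hτ => by rw [h_rpow τ hτ],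
    ← ofReal_integral_eq_lintegral_ofReal, integral_const_mul,
    integral_Ioi_rpow_of_lt (by norm_num) ha]
  · norm_num [Real.rpow_neg_one, div_eq_mul_inv]
  · exact (integrableOn_Ioi_rpow_of_lt (by norm_num) ha).const_mul c
  · filter_upwards [self_mem_ae_restrict measurableSet_Ioi] with τ hτ
    exact mul_nonneg hc (Real.rpow_nonneg (ha.trans hτ).le _)

lemma lintegral_Ioi_zero_le_of_Ioc_of_Ioi {f : ℝ → ℝ≥0∞} {a c₁ c₂ : ℝ} (ha : 0 ≤ a)
    (hc₁ : 0 ≤ c₁) (hc₂ : 0 ≤ c₂) (h₁ : ∫⁻ τ in Ioc 0 a, f τ ≤ ENNReal.ofReal c₁)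
    (h₂ : ∫⁻ τ in Ioi a, f τ ≤ ENNReal.ofReal c₂) :
    ∫⁻ τ in Ioi 0, f τ ≤ ENNReal.ofReal (c₁ + c₂) := by
  rw [← Ioc_union_Ioi_eq_Ioi ha, lintegral_union measurableSet_Ioi Ioc_disjoint_Ioi_same,
    ofReal_add hc₁ hc₂]
  exact add_le_add h₁ h₂

section

variable {η : ℝ → ℝ} {a : ℝ}

lemma lintegral_Ioc_div_add_sq_le (ha : 0 < a) :
    ∫⁻ τ in Ioc 0 a, ENNReal.ofReal (η τ / (τ + a) ^ 2)
      ≤ (∫⁻ τ in Ioc 0 a, ENNReal.ofReal (η τ)) * ENNReal.ofReal (a ^ 2)⁻¹ := by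
  rw [← lintegral_mul_const' _ _ ofReal_ne_top]
  refine setLIntegral_mono' measurableSet_Ioc fun τ hτ => ?_
  rw [← ofReal_mul' (by positivity), ← div_eq_mul_inv]
  exact ofReal_div_le_ofReal_div_of_le (by positivity)
    (pow_le_pow_left₀ ha.le (by linarith [hτ.1]) 2)

lemma lintegral_Ioi_div_add_sq_le (ha : 0 < a) :
    ∫⁻ τ in Ioi a, ENNReal.ofReal (η τ / (τ + a) ^ 2)
      ≤ ∫⁻ τ in Ioi a, ENNReal.ofReal (η τ / τ ^ 2) :=
  setLIntegral_mono' measurableSet_Ioi fun τ hτ =>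
    have hτ₀ : 0 < τ := ha.trans hτ
    ofReal_div_le_ofReal_div_of_le (by positivity) (pow_le_pow_left₀ hτ₀.le (by linarith) 2)

lemma lintegral_Ioc_div_add_sq_le_of_le (ha : 0 < a) (h : ∀ τ ∈ Ioc 0 a, η τ ≤ η a) :
    ∫⁻ τ in Ioc 0 a, ENNReal.ofReal (η τ / (τ + a) ^ 2) ≤ ENNReal.ofReal (η a / a) :=
  calc _ ≤ ∫⁻ τ in Ioc 0 a, ENNReal.ofReal (η a / a ^ 2) :=
        setLIntegral_mono' measurableSet_Ioc fun τ hτ =>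
          (ofReal_le_ofReal (div_le_div_of_nonneg_right (h τ hτ) (by positivity))).trans
            (ofReal_div_le_ofReal_div_of_le (by positivity)
              (pow_le_pow_left₀ ha.le (by linarith [hτ.1]) 2))
    _ = ENNReal.ofReal (η a / a) := by
        rw [setLIntegral_const, Real.volume_Ioc, sub_zero, ← ofReal_mul' ha.le]
        congr 1
        field_simp

lemma lintegral_Ioi_div_add_sq_le_of_le (ha : 0 < a) (h : ∀ τ ∈ Ioi a, η τ ≤ η a) :
    ∫⁻ τ in Ioi a, ENNReal.ofReal (η τ / (τ + a) ^ 2) ≤ ENNReal.ofReal (η a / a) :=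
  calc _ ≤ ∫⁻ τ in Ioi a, ENNReal.ofReal (η a / τ ^ 2) :=
        setLIntegral_mono' measurableSet_Ioi fun τ hτ =>
          have hτ₀ : 0 < τ := ha.trans hτ
          (ofReal_le_ofReal (div_le_div_of_nonneg_right (h τ hτ) (by positivity))).trans
            (ofReal_div_le_ofReal_div_of_le (by positivity)
              (pow_le_pow_left₀ hτ₀.le (by linarith) 2))
    _ = ENNReal.ofReal (η a / a) := lintegral_Ioi_div_sq ha _

theorem CondC1.exists_lintegral_Ioi_div_add_sq_le (h : CondC1 η)
    (hη : ∀ τ, 0 < τ → 0 ≤ η τ) {K : ℝ} (hK : 0 < K) :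
    ∃ C > 0, ∀ a, K ≤ a →
      ∫⁻ τ in Ioi 0, ENNReal.ofReal (η τ / (τ + a) ^ 2) ≤ ENNReal.ofReal (C * η a / a) := by
  obtain ⟨h_anti, h_int⟩ := h
  obtain ⟨D, hD, hD_bound⟩ := h_int K hK
  refine ⟨D + 1, by positivity, fun a haK => ?_⟩
  have ha : 0 < a := hK.trans_le haK
  have hηa := hη a ha
  have h_head : ∫⁻ τ in Ioc 0 a, ENNReal.ofReal (η τ / (τ + a) ^ 2)
      ≤ ENNReal.ofReal (D * η a / a) :=
    calc _ ≤ (∫⁻ τ in Ioc 0 a, ENNReal.ofReal (η τ)) * ENNReal.ofReal (a ^ 2)⁻¹ :=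
          lintegral_Ioc_div_add_sq_le ha
      _ ≤ ENNReal.ofReal (D * a * η a) * ENNReal.ofReal (a ^ 2)⁻¹ := by
          gcongr
          exact hD_bound a haK
      _ = ENNReal.ofReal (D * η a / a) := by
          rw [← ofReal_mul' (by positivity)]
          congr 1
          field_simp
  have h_tail := lintegral_Ioi_div_add_sq_le_of_le ha fun τ hτ => h_anti a τ ha hτ.le
  convert lintegral_Ioi_zero_le_of_Ioc_of_Ioi ha.le (by positivity) (by positivity)
    h_head h_tail using 2
  ring

theorem CondC2.exists_lintegral_Ioi_div_add_sq_le (h : CondC2 η)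
    (hη : ∀ τ, 0 < τ → 0 ≤ η τ) {K : ℝ} (hK : 0 < K) :
    ∃ C > 0, ∀ a, K ≤ a →
      ∫⁻ τ in Ioi 0, ENNReal.ofReal (η τ / (τ + a) ^ 2) ≤ ENNReal.ofReal (C * η a / a) := by
  obtain ⟨h_mono, h_int⟩ := h
  obtain ⟨D, hD, hD_bound⟩ := h_int K hK
  refine ⟨1 + D, by positivity, fun a haK => ?_⟩
  have ha : 0 < a := hK.trans_le haK
  have hηa := hη a ha
  have h_head := lintegral_Ioc_div_add_sq_le_of_le ha fun τ hτ => h_mono τ a hτ.1 hτ.2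
  have h_tail := (lintegral_Ioi_div_add_sq_le ha).trans (hD_bound a haK)
  convert lintegral_Ioi_zero_le_of_Ioc_of_Ioi ha.le (by positivity) (by positivity)
    h_head h_tail using 2
  ring

end

theorem stmt_10_general (η : ℝ → ℝ)
    (hpos : ∀ τ : ℝ, 0 < τ → 0 < η τ)
    (hcond : CondC1 η ∨ CondC2 η) :
    ∀ K : ℝ, 0 < K → ∃ M : ℝ, 0 < M ∧ ∀ a : ℝ, K ≤ a →
      ENNReal.ofReal (1 / a) * ∫⁻ τ : ℝ, ENNReal.ofReal (η |τ| / (|τ| + a) ^ 2)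
        ≤ ENNReal.ofReal (M * η a / a ^ 2) := by
  intro K hK
  have hη : ∀ τ : ℝ, 0 < τ → 0 ≤ η τ := fun τ hτ => (hpos τ hτ).le
  obtain ⟨C, hC, h_bound⟩ := hcond.elim (·.exists_lintegral_Ioi_div_add_sq_le hη hK)
    (·.exists_lintegral_Ioi_div_add_sq_le hη hK)
  refine ⟨2 * C, by positivity, fun a haK => ?_⟩
  have ha : 0 < a := hK.trans_le haK
  rw [lintegral_comp_abs fun τ => ENNReal.ofReal (η τ / (τ + a) ^ 2)]
  calc _ ≤ ENNReal.ofReal (1 / a) * (2 * ENNReal.ofReal (C * η a / a)) := by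
        gcongr
        exact h_bound a haK
    _ = ENNReal.ofReal (2 * C * η a / a ^ 2) := by
        rw [← ofReal_ofNat 2, ← ofReal_mul zero_le_two, ← ofReal_mul (by positivity)]
        congr 1
        field_simp

/-- Lemma 6.5: `(1/a) ∫ η(|τ|)/(|τ|+a)² dτ ≤ M_K η(a)/a²` for `a ≥ K`. -/
theorem stmt_10 (η : ℝ → ℝ)
    (hmeas : Measurable η) (hpos : ∀ τ : ℝ, 0 < τ → 0 < η τ)
    (hcond : CondC1 η ∨ CondC2 η) :
    ∀ K : ℝ, 0 < K → ∃ M : ℝ, 0 < M ∧ ∀ a : ℝ, K ≤ a →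
      ENNReal.ofReal (1 / a) * ∫⁻ τ : ℝ, ENNReal.ofReal (η |τ| / (|τ| + a) ^ 2)
        ≤ ENNReal.ofReal (M * η a / a ^ 2) :=
  stmt_10_general η hpos hcond
end

section
/- Let γ ∈ (−1,1). Then there exist constants C_γ^{(1)} > 0 and C_γ^{(2)} > 0 (depending only on γ) such that for every a > 1: C_γ^{(1)} a^{−γ−1} ≤ ∫_ℝ (τ² + a²)^{−1} (τ² + 1)^{−γ/2} dτ ≤ C_γ^{(2)} a^{−γ−1}. -/
/-!
Folding the even integrand onto `(0, ∞)` and substituting `τ = a s` gives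
`∫ = 2 a^{-γ-1} ∫₀^∞ (s² + 1)⁻¹ (s² + a⁻²)^{-γ/2} ds`. Since `(s² + c)^{-γ/2}` is monotone in
`c ∈ [0, 1]`, the last integral lies between its values at `c = 0` and `c = 1`. Both are positive
and finite: at `c = 1` because `2 + γ > 1`, and at `c = 0` because it is the Mellin transform of
`(1 + s²)⁻¹` at `1 - γ ∈ (0, 2)`.
-/

open MeasureTheory Real Set Filter Asymptotics

noncomputable def rescaledIntegrand (γ c s : ℝ) : ℝ :=
  (s ^ 2 + 1)⁻¹ * (s ^ 2 + c) ^ (-γ / 2)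

lemma rescaledIntegrand_nonneg {γ c : ℝ} (hc : 0 ≤ c) (s : ℝ) : 0 ≤ rescaledIntegrand γ c s := by
  unfold rescaledIntegrand; positivity

lemma integrand_mul_eq_rpow_mul_rescaledIntegrand (γ : ℝ) {a : ℝ} (ha : 0 < a) (s : ℝ) :
    ((a * s) ^ 2 + a ^ 2)⁻¹ * ((a * s) ^ 2 + 1) ^ (-γ / 2) =
      a ^ (-γ - 2) * rescaledIntegrand γ (a ^ 2)⁻¹ s := by
  have ha2 : 0 < a ^ 2 := by positivity
  have hsq : (a ^ 2) ^ (-γ / 2) = a ^ (-γ) := by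
    rw [← rpow_natCast, ← rpow_mul ha.le]; congr 1; ring
  rw [show (a * s) ^ 2 + a ^ 2 = a ^ 2 * (s ^ 2 + 1) by ring,
    show (a * s) ^ 2 + 1 = a ^ 2 * (s ^ 2 + (a ^ 2)⁻¹) by field_simp,
    mul_rpow ha2.le (by positivity), hsq, rescaledIntegrand, rpow_sub ha, rpow_two]
  field_simp

lemma integral_eq_two_mul_rpow_mul_integral_rescaledIntegrand (γ : ℝ) {a : ℝ} (ha : 0 < a) :
    ∫ τ : ℝ, (τ ^ 2 + a ^ 2)⁻¹ * (τ ^ 2 + 1) ^ (-γ / 2) =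
      2 * a ^ (-γ - 1) * ∫ s in Ioi 0, rescaledIntegrand γ (a ^ 2)⁻¹ s := by
  have hfold := integral_comp_abs (f := fun τ ↦ (τ ^ 2 + a ^ 2)⁻¹ * (τ ^ 2 + 1) ^ (-γ / 2))
  simp only [sq_abs] at hfold
  have hscale := integral_comp_mul_left_Ioi'
    (fun τ ↦ (τ ^ 2 + a ^ 2)⁻¹ * (τ ^ 2 + 1) ^ (-γ / 2)) 0 ha
  rw [mul_zero] at hscale
  rw [hfold, ← hscale]
  simp only [integrand_mul_eq_rpow_mul_rescaledIntegrand γ ha, integral_const_mul, smul_eq_mul]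
  rw [show -γ - 1 = (-γ - 2) + 1 by ring, rpow_add_one ha.ne']
  ring

lemma integrableOn_rescaledIntegrand_zero {γ : ℝ} (hγ : γ ∈ Ioo (-1) 1) :
    IntegrableOn (rescaledIntegrand γ 0) (Ioi 0) := by
  have hmellin : IntegrableOn (fun s : ℝ ↦ s ^ ((1 - γ) - 1) * (s ^ 2 + 1)⁻¹) (Ioi 0) := by
    refine mellin_convergent_of_isBigO_scalar (a := 2) (b := 0) ?_ ?_ (by linarith [hγ.1]) ?_
      (by linarith [hγ.2])
    · have : Continuous fun s : ℝ ↦ (s ^ 2 + 1)⁻¹ :=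
        (by fun_prop : Continuous fun s : ℝ ↦ s ^ 2 + 1).inv₀ fun s ↦ by positivity
      exact this.continuousOn.locallyIntegrableOn measurableSet_Ioi
    · refine IsBigO.of_bound 1 ?_
      filter_upwards [eventually_gt_atTop 0] with s hs
      rw [norm_inv, norm_of_nonneg (by positivity), norm_of_nonneg (by positivity), one_mul,
        rpow_neg hs.le, rpow_two]
      exact inv_anti₀ (by positivity) (by linarith)
    · refine IsBigO.of_bound 1 (Eventually.of_forall fun s ↦ ?_)
      rw [neg_zero, rpow_zero, norm_one, one_mul, norm_inv, norm_of_nonneg (by positivity)]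
      exact inv_le_one_of_one_le₀ (by nlinarith)
  refine hmellin.congr_fun (fun s hs ↦ ?_) measurableSet_Ioi
  dsimp only
  rw [rescaledIntegrand, add_zero, mul_comm, show 1 - γ - 1 = 2 * (-γ / 2) by ring,
    rpow_mul (le_of_lt hs), rpow_two]

lemma integrableOn_rescaledIntegrand_one {γ : ℝ} (hγ : -1 < γ) :
    IntegrableOn (rescaledIntegrand γ 1) (Ioi 0) := by
  have h := integrable_rpow_neg_one_add_norm_sq (E := ℝ) (μ := volume) (r := 2 + γ)
    (by rw [Module.finrank_self, Nat.cast_one]; linarith)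
  refine (h.congr (Eventually.of_forall fun s ↦ ?_)).integrableOn
  have hs : 0 < 1 + ‖s‖ ^ 2 := by positivity
  simp only [rescaledIntegrand, norm_eq_abs, sq_abs] at hs ⊢
  rw [add_comm (s ^ 2), ← rpow_neg_one, ← rpow_add hs]
  ring_nf

lemma rescaledIntegrand_le_of_nonneg {γ c d s : ℝ} (hγ : 0 ≤ γ) (hs : 0 < s) (hc : 0 ≤ c)
    (hcd : c ≤ d) : rescaledIntegrand γ d s ≤ rescaledIntegrand γ c s :=
  mul_le_mul_of_nonneg_left
    (rpow_le_rpow_of_nonpos (by positivity) (by linarith) (by linarith)) (by positivity)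

lemma rescaledIntegrand_le_of_nonpos {γ c d s : ℝ} (hγ : γ ≤ 0) (hc : 0 ≤ c) (hcd : c ≤ d) :
    rescaledIntegrand γ c s ≤ rescaledIntegrand γ d s :=
  mul_le_mul_of_nonneg_left
    (rpow_le_rpow (by positivity) (by linarith) (by linarith)) (by positivity)

lemma integrableOn_rescaledIntegrand {γ c : ℝ} (hγ : γ ∈ Ioo (-1) 1) (hc : c ∈ Icc 0 1) :
    IntegrableOn (rescaledIntegrand γ c) (Ioi 0) := by
  have hmeas : Measurable (rescaledIntegrand γ c) := by
    unfold rescaledIntegrand; fun_prop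
  rcases le_total 0 γ with hγ0 | hγ0
  · refine (integrableOn_rescaledIntegrand_zero hγ).mono' hmeas.aestronglyMeasurable ?_
    filter_upwards [ae_restrict_mem measurableSet_Ioi] with s hs
    rw [norm_of_nonneg (rescaledIntegrand_nonneg hc.1 s)]
    exact rescaledIntegrand_le_of_nonneg hγ0 hs le_rfl hc.1
  · refine (integrableOn_rescaledIntegrand_one hγ.1).mono' hmeas.aestronglyMeasurable
      (Eventually.of_forall fun s ↦ ?_)
    rw [norm_of_nonneg (rescaledIntegrand_nonneg hc.1 s)]
    exact rescaledIntegrand_le_of_nonpos hγ0 hc.1 hc.2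

lemma integral_rescaledIntegrand_pos {γ c : ℝ} (hγ : γ ∈ Ioo (-1) 1) (hc : c ∈ Icc 0 1) :
    0 < ∫ s in Ioi 0, rescaledIntegrand γ c s := by
  rw [setIntegral_pos_iff_support_of_nonneg_ae
    (Eventually.of_forall (rescaledIntegrand_nonneg hc.1)) (integrableOn_rescaledIntegrand hγ hc)]
  have : Ioi (0 : ℝ) ⊆ Function.support (rescaledIntegrand γ c) := fun s hs ↦ by
    unfold rescaledIntegrand
    exact (mul_pos (by positivity) (rpow_pos_of_pos (by nlinarith [hc.1, mem_Ioi.1 hs]) _)).ne'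
  rw [inter_eq_right.2 this, volume_Ioi]
  exact ENNReal.zero_lt_top

lemma integral_rescaledIntegrand_mem_uIcc {γ c : ℝ} (hγ : γ ∈ Ioo (-1) 1) (hc : c ∈ Icc 0 1) :
    ∫ s in Ioi 0, rescaledIntegrand γ c s ∈
      uIcc (∫ s in Ioi 0, rescaledIntegrand γ 0 s) (∫ s in Ioi 0, rescaledIntegrand γ 1 s) := by
  have hint : ∀ d ∈ Icc (0 : ℝ) 1, IntegrableOn (rescaledIntegrand γ d) (Ioi 0) :=
    fun d hd ↦ integrableOn_rescaledIntegrand hγ hd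
  have h0 : (0 : ℝ) ∈ Icc 0 1 := ⟨le_rfl, zero_le_one⟩
  have h1 : (1 : ℝ) ∈ Icc 0 1 := ⟨zero_le_one, le_rfl⟩
  rcases le_total 0 γ with hγ0 | hγ0
  · refine mem_uIcc.2 (Or.inr ⟨?_, ?_⟩) <;>
      refine setIntegral_mono_on (hint _ ‹_›) (hint _ ‹_›) measurableSet_Ioi fun s hs ↦ ?_
    · exact rescaledIntegrand_le_of_nonneg hγ0 hs hc.1 hc.2
    · exact rescaledIntegrand_le_of_nonneg hγ0 hs le_rfl hc.1
  · refine mem_uIcc.2 (Or.inl ⟨?_, ?_⟩) <;>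
      refine setIntegral_mono_on (hint _ ‹_›) (hint _ ‹_›) measurableSet_Ioi fun s _ ↦ ?_
    · exact rescaledIntegrand_le_of_nonpos hγ0 le_rfl hc.1
    · exact rescaledIntegrand_le_of_nonpos hγ0 hc.1 hc.2

/-- Lemma B.1.(ii): two-sided bound
`C_γ⁽¹⁾ a^{-γ-1} ≤ ∫ (τ²+a²)⁻¹ (τ²+1)^{-γ/2} dτ ≤ C_γ⁽²⁾ a^{-γ-1}` for `a > 1`. -/
theorem stmt_16 (γ : ℝ) (hγ : γ ∈ Set.Ioo (-1 : ℝ) 1) :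
    ∃ C1 C2 : ℝ, 0 < C1 ∧ 0 < C2 ∧ ∀ a : ℝ, 1 < a →
      C1 * a ^ (-γ - 1) ≤ (∫ τ : ℝ, (τ ^ 2 + a ^ 2)⁻¹ * (τ ^ 2 + 1) ^ (-γ / 2)) ∧
      (∫ τ : ℝ, (τ ^ 2 + a ^ 2)⁻¹ * (τ ^ 2 + 1) ^ (-γ / 2)) ≤ C2 * a ^ (-γ - 1) := by
  set J : ℝ → ℝ := fun c ↦ ∫ s in Ioi 0, rescaledIntegrand γ c s
  have hJ0 : 0 < J 0 := integral_rescaledIntegrand_pos hγ ⟨le_rfl, zero_le_one⟩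
  have hJ1 : 0 < J 1 := integral_rescaledIntegrand_pos hγ ⟨zero_le_one, le_rfl⟩
  refine ⟨2 * (J 0 ⊓ J 1), 2 * (J 0 ⊔ J 1), by positivity, by positivity, fun a ha ↦ ?_⟩
  have ha0 : 0 < a := one_pos.trans ha
  have hc : (a ^ 2)⁻¹ ∈ Icc (0 : ℝ) 1 := ⟨by positivity, inv_le_one_of_one_le₀ (by nlinarith)⟩
  obtain ⟨hlow, hup⟩ := integral_rescaledIntegrand_mem_uIcc hγ hc
  have hpow : 0 < a ^ (-γ - 1) := rpow_pos_of_pos ha0 _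
  rw [integral_eq_two_mul_rpow_mul_integral_rescaledIntegrand γ ha0]
  constructor <;> nlinarith
end

section
/- Let ν be a Borel measure on ℝ with K := ∫_ℝ 1/(1+τ²) ν(dτ) < ∞. For t > 0 and a ≥ 0 set N_t(a) := ∫_ℝ |∫_0^t e^{−iτs} e^{−sa} ds|² ν(dτ). Then for every t > 0 and every a ≥ 0: N_t(a) ≤ 2K max(t², 5). -/
/-!
With `c = -(a + iτ)`, the inner integral is `I = ∫₀ᵗ e^{cs} ds`. Since `Re c ≤ 0` the integrand has
modulus at most one, so `|I| ≤ t`, and `c I = e^{ct} - 1` gives `|τ| |I| ≤ |c| |I| ≤ 2`. Hence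
`|I|² (1 + τ²) ≤ t² + 4 ≤ 2 max(t², 5)`, and integrating against `ν` gives the bound.
-/

open MeasureTheory

namespace Complex

variable {c : ℂ} {t : ℝ}

lemma norm_exp_mul_ofReal_le_one (hc : c.re ≤ 0) {s : ℝ} (hs : 0 ≤ s) : ‖exp (c * s)‖ ≤ 1 := by
  rw [norm_exp, re_mul_ofReal]
  exact Real.exp_le_one_iff.2 (mul_nonpos_of_nonpos_of_nonneg hc hs)

lemma norm_integral_exp_mul_le (hc : c.re ≤ 0) (ht : 0 ≤ t) :
    ‖∫ s in (0:ℝ)..t, exp (c * s)‖ ≤ t := by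
  have h := intervalIntegral.norm_integral_le_of_norm_le_const (a := 0) (b := t) (C := 1)
    (f := fun s : ℝ => exp (c * s)) fun s hs ↦ by
      rw [Set.uIoc_of_le ht] at hs
      exact norm_exp_mul_ofReal_le_one hc hs.1.le
  simpa [abs_of_nonneg ht] using h

lemma norm_mul_norm_integral_exp_mul_le_two (hc : c.re ≤ 0) (ht : 0 ≤ t) :
    ‖c‖ * ‖∫ s in (0:ℝ)..t, exp (c * s)‖ ≤ 2 := by
  rcases eq_or_ne c 0 with rfl | hc0
  · simp
  rw [← norm_mul, integral_exp_mul_complex hc0, mul_div_cancel₀ _ hc0]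
  calc ‖exp (c * t) - exp (c * (0:ℝ))‖ ≤ ‖exp (c * t)‖ + ‖exp (c * (0:ℝ))‖ := norm_sub_le _ _
    _ ≤ 1 + 1 := add_le_add (norm_exp_mul_ofReal_le_one hc ht) (by simp)
    _ = 2 := by norm_num

end Complex

lemma norm_sq_integral_exp_damped_oscillation_le {t a : ℝ} (ht : 0 ≤ t) (ha : 0 ≤ a) (τ : ℝ) :
    ‖∫ s in (0:ℝ)..t, Complex.exp (-(τ * Complex.I * s)) * (Real.exp (-(s * a)) : ℂ)‖ ^ 2
      ≤ (t ^ 2 + 4) / (1 + τ ^ 2) := by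
  set c : ℂ := -(τ * Complex.I + a)
  have hc : c.re ≤ 0 := by simpa [c] using ha
  have hfun : (fun s : ℝ => Complex.exp (-(τ * Complex.I * s)) * (Real.exp (-(s * a)) : ℂ))
      = fun s : ℝ => Complex.exp (c * s) := by
    funext s
    rw [Complex.ofReal_exp, ← Complex.exp_add]
    congr 1
    push_cast [c]
    ring
  rw [hfun, le_div_iff₀ (by positivity)]
  set I := ∫ s in (0:ℝ)..t, Complex.exp (c * s)
  have hI : ‖I‖ ≤ t := Complex.norm_integral_exp_mul_le hc ht
  have hτI : |τ| * ‖I‖ ≤ 2 := by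
    have hτc : |τ| ≤ ‖c‖ := by simpa [c] using Complex.abs_im_le_norm c
    exact (mul_le_mul_of_nonneg_right hτc (norm_nonneg I)).trans
      (Complex.norm_mul_norm_integral_exp_mul_le_two hc ht)
  have hτI' : (|τ| * ‖I‖) ^ 2 ≤ 4 := by
    nlinarith [mul_nonneg (abs_nonneg τ) (norm_nonneg I)]
  rw [mul_pow, sq_abs] at hτI'
  nlinarith [pow_le_pow_left₀ (norm_nonneg I) hI 2]

/-- The bound `N_t(a) ≤ 2 K max(t², 5)` for the parabolic quantity, where
`K = ∫ 1/(1+τ²) ν(dτ)`. -/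
theorem stmt_19 (ν : Measure ℝ)
    (hK : Integrable (fun τ => 1 / (1 + τ ^ 2)) ν) :
    ∀ t a : ℝ, 0 < t → 0 ≤ a →
      (∫⁻ τ, ENNReal.ofReal
          (‖∫ s in (0:ℝ)..t, Complex.exp (-(τ * Complex.I * s))
              * (Real.exp (-(s * a)) : ℂ)‖ ^ 2) ∂ν)
        ≤ ENNReal.ofReal (2 * (∫ τ, 1 / (1 + τ ^ 2) ∂ν) * max (t ^ 2) 5) := by
  intro t a ht ha
  set C : ℝ := 2 * max (t ^ 2) 5
  have hC : t ^ 2 + 4 ≤ C := by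
    have := le_max_left (t ^ 2) 5
    have := le_max_right (t ^ 2) 5
    linarith
  have hpointwise (τ : ℝ) :
      ‖∫ s in (0:ℝ)..t, Complex.exp (-(τ * Complex.I * s)) * (Real.exp (-(s * a)) : ℂ)‖ ^ 2
        ≤ C * (1 / (1 + τ ^ 2)) := by
    refine (norm_sq_integral_exp_damped_oscillation_le ht.le ha τ).trans ?_
    rw [mul_one_div]
    gcongr
  calc _ ≤ ∫⁻ τ, ENNReal.ofReal (C * (1 / (1 + τ ^ 2))) ∂ν :=
        lintegral_mono fun τ ↦ ENNReal.ofReal_le_ofReal (hpointwise τ)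
    _ = ENNReal.ofReal (∫ τ, C * (1 / (1 + τ ^ 2)) ∂ν) :=
        (ofReal_integral_eq_lintegral_ofReal (hK.const_mul C)
          (.of_forall fun τ ↦ by positivity)).symm
    _ = _ := by rw [integral_const_mul]; congr 1; ring
end
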